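/- arXiv:2108.11806 — 13 statements merged into one kernel-verified Lean document; each statement's English description precedes it below -/
import Mathlib

section
/- Let cl = [cl^0, ..., cl^{m-1}] be a d-exceptional sequence in Z^r with d = (1,...,1), i.e., for each i < j there exists an index ν with cl^j_ν - cl^i_ν = 1. Then the reduction map Φ: cl → (Z/2Z)^r given by reducing each coordinate mod 2 is injective; in particular m ≤ 2^r. -/
/-- A sequence `cl` in `ℤ^r` is exceptional if for all `i < j` there is a
coordinate `ν` with `cl j ν - cl i ν = 1`. -/
def IsExceptional {r m : ℕ} (cl : Fin m → (Fin r → ℤ)) : Prop :=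
  ∀ i j : Fin m, i < j → ∃ ν : Fin r, cl j ν - cl i ν = 1

theorem stmt_0 {r m : ℕ} (cl : Fin m → (Fin r → ℤ)) (h : IsExceptional cl) :
    Function.Injective (fun i : Fin m => fun ν : Fin r => (cl i ν : ZMod 2)) ∧
    m ≤ 2 ^ r := by
  have hinj : Function.Injective
      (fun i : Fin m => fun ν : Fin r => (cl i ν : ZMod 2)) := by
    intro i j hij
    by_contra hne
    have key : ∀ a b : Fin m, a < b →
        (fun ν : Fin r => (cl a ν : ZMod 2)) ≠ (fun ν => (cl b ν : ZMod 2)) := by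
      intro a b hab heq
      obtain ⟨ν, hν⟩ := h a b hab
      have : ((cl b ν - cl a ν : ℤ) : ZMod 2) = 0 := by
        push_cast
        have := congrFun heq ν
        rw [← this]; ring
      rw [hν] at this
      exact one_ne_zero this
    rcases lt_trichotomy i j with hlt | heq | hgt
    · exact key i j hlt hij
    · exact hne heq
    · exact key j i hgt hij.symm
  refine ⟨hinj, ?_⟩
  have := Fintype.card_le_of_injective _ hinj
  simpa [Fintype.card_fun] using this
end

section
/- Let cl be an exceptional sequence in Z^r of length exactly 2^r (a maximal exceptional sequence). Then the coordinatewise mod-2 reduction map Φ: cl → (Z/2Z)^r is a bijection. -/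
theorem stmt_1 {r : ℕ} (cl : Fin (2 ^ r) → (Fin r → ℤ)) (h : IsExceptional cl) :
    Function.Bijective (fun i : Fin (2 ^ r) => fun ν : Fin r => (cl i ν : ZMod 2)) := by
  have key : ∀ i j : Fin (2 ^ r), i < j →
      (fun ν : Fin r => (cl i ν : ZMod 2)) ≠ (fun ν : Fin r => (cl j ν : ZMod 2)) := by
    intro i j hlt heq
    obtain ⟨ν, hν⟩ := h i j hlt
    have h2 : cl j ν = cl i ν + 1 := by linarith
    have := congrFun heq ν
    rw [h2] at this
    push_cast at this
    have : (1 : ZMod 2) = 0 := by linear_combination -this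
    exact one_ne_zero this
  have hinj : Function.Injective
      (fun i : Fin (2 ^ r) => fun ν : Fin r => (cl i ν : ZMod 2)) := by
    intro i j hij
    by_contra hne
    rcases lt_or_gt_of_ne hne with hlt | hlt
    · exact key i j hlt hij
    · exact key j i hlt hij.symm
  refine (Fintype.bijective_iff_injective_and_card _).mpr ⟨hinj, ?_⟩
  simp
end

section
/- Let cl be an exceptional sequence in Z^r, fix a coordinate ν ∈ {1,...,r}, and let C ⊂ Z be a set with 1 ∉ C - C (no two elements of C are adjacent integers). Then the projection q_ν: Z^r → Z^{r-1} forgetting the ν-th coordinate is injective on the union of layers L_c = {x ∈ cl : x_ν = c} over c ∈ C, and the image, ordered by the inherited order, is an exceptional sequence in Z^{r-1}. -/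
/-- The projection `ℤ^(r+1) → ℤ^r` forgetting the `ν`-th coordinate. -/
def qdrop {r : ℕ} (ν : Fin (r + 1)) (x : Fin (r + 1) → ℤ) : Fin r → ℤ :=
  fun μ => x (ν.succAbove μ)

theorem stmt_2 {r m : ℕ} (cl : Fin m → (Fin (r + 1) → ℤ)) (h : IsExceptional cl)
    (ν : Fin (r + 1)) (C : Set ℤ) (hC : ∀ a ∈ C, ∀ b ∈ C, a - b ≠ 1) :
    Set.InjOn (fun i => qdrop ν (cl i)) {i : Fin m | cl i ν ∈ C} ∧
    ∀ i ∈ {i : Fin m | cl i ν ∈ C}, ∀ j ∈ {i : Fin m | cl i ν ∈ C}, i < j →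
      ∃ μ : Fin r, qdrop ν (cl j) μ - qdrop ν (cl i) μ = 1 := by
  have key : ∀ i ∈ {i : Fin m | cl i ν ∈ C}, ∀ j ∈ {i : Fin m | cl i ν ∈ C}, i < j →
      ∃ μ : Fin r, qdrop ν (cl j) μ - qdrop ν (cl i) μ = 1 := by
    intro i hi j hj hij
    obtain ⟨ν', hν'⟩ := h i j hij
    have hne : ν' ≠ ν := by
      rintro rfl
      exact hC _ hj _ hi hν'
    obtain ⟨μ, hμ⟩ := Fin.exists_succAbove_eq hne
    exact ⟨μ, by simpa [qdrop, hμ] using hν'⟩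
  refine ⟨?_, key⟩
  intro i hi j hj heq
  by_contra hne
  rcases lt_or_gt_of_ne hne with hlt | hlt
  · obtain ⟨μ, hμ⟩ := key i hi j hj hlt
    simp only [] at heq; rw [show qdrop ν (cl i) = qdrop ν (cl j) from heq] at hμ; simp at hμ
  · obtain ⟨μ, hμ⟩ := key j hj i hi hlt
    simp only [] at heq; rw [show qdrop ν (cl i) = qdrop ν (cl j) from heq] at hμ; simp at hμ
end

section
/- Let cl be a maximal exceptional sequence in Z^r (length 2^r), fix ν, and let A, B ⊂ Z be disjoint sets each satisfying 1 ∉ A - A and 1 ∉ B - B, with cl contained in the union of layers indexed by A ∪ B. Then the projections q_ν(⋃_{c∈A} L_c) and q_ν(⋃_{c∈B} L_c) are both maximal exceptional sequences in Z^{r-1}, i.e., each has exactly 2^{r-1} elements. -/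
lemma exc_bound : ∀ (r m : ℕ) (f : Fin m → Fin r → ℤ) (S : Set (Fin m)),
    (∀ i ∈ S, ∀ j ∈ S, i < j → ∃ ν, f j ν - f i ν = 1) → S.ncard ≤ 2 ^ r := by
  intro r
  induction r with
  | zero =>
    intro m f S hS
    by_contra hc
    push_neg at hc
    rw [pow_zero] at hc
    obtain ⟨a, b, ha, hb, hab⟩ := (Set.one_lt_ncard_iff (Set.toFinite S)).mp hc
    rcases lt_or_gt_of_ne hab with hlt | hgt
    · obtain ⟨ν, -⟩ := hS a ha b hb hlt; exact ν.elim0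
    · obtain ⟨ν, -⟩ := hS b hb a ha hgt; exact ν.elim0
  | succ r ih =>
    intro m f S hS
    set S₁ : Set (Fin m) := S ∩ {i | Even (f i 0)} with hS₁
    set S₂ : Set (Fin m) := S ∩ {i | ¬ Even (f i 0)} with hS₂
    have hcov : S = S₁ ∪ S₂ := by
      ext i
      simp only [hS₁, hS₂, Set.mem_union, Set.mem_inter_iff, Set.mem_setOf_eq]
      tauto
    have key : ∀ (T : Set (Fin m)), T ⊆ S → (∀ i ∈ T, ∀ j ∈ T, (Even (f i 0) ↔ Even (f j 0))) →
        T.ncard ≤ 2 ^ r := by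
      intro T hTS hpar
      apply ih m (fun i μ => f i ((0 : Fin (r+1)).succAbove μ)) T
      intro i hi j hj hij
      obtain ⟨ν, hν⟩ := hS i (hTS hi) j (hTS hj) hij
      have hν0 : ν ≠ 0 := by
        rintro rfl
        have h2 : Even (f j 0 - f i 0) := Int.even_sub.mpr ((hpar i hi j hj).symm)
        rw [hν] at h2
        rcases h2 with ⟨k, hk⟩
        omega
      refine ⟨ν.pred hν0, ?_⟩
      simpa [Fin.zero_succAbove, Fin.succ_pred] using hν
    have h1 : S₁.ncard ≤ 2 ^ r := by
      apply key S₁ Set.inter_subset_left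
      intro i hi j hj
      simp only [hS₁, Set.mem_inter_iff, Set.mem_setOf_eq] at hi hj
      exact ⟨fun _ => hj.2, fun _ => hi.2⟩
    have h2 : S₂.ncard ≤ 2 ^ r := by
      apply key S₂ Set.inter_subset_left
      intro i hi j hj
      simp only [hS₂, Set.mem_inter_iff, Set.mem_setOf_eq] at hi hj
      constructor
      · intro hie; exact absurd hie hi.2
      · intro hje; exact absurd hje hj.2
    calc S.ncard ≤ S₁.ncard + S₂.ncard := by rw [hcov]; exact Set.ncard_union_le _ _
      _ ≤ 2 ^ r + 2 ^ r := Nat.add_le_add h1 h2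
      _ = 2 ^ (r + 1) := by ring

theorem stmt_3 {r : ℕ} (cl : Fin (2 ^ (r + 1)) → (Fin (r + 1) → ℤ))
    (h : IsExceptional cl) (ν : Fin (r + 1)) (A B : Set ℤ) (hAB : Disjoint A B)
    (hA : ∀ a ∈ A, ∀ b ∈ A, a - b ≠ 1) (hB : ∀ a ∈ B, ∀ b ∈ B, a - b ≠ 1)
    (hcl : ∀ i, cl i ν ∈ A ∪ B) :
    ((fun i => qdrop ν (cl i)) '' {i | cl i ν ∈ A}).ncard = 2 ^ r ∧
    ((fun i => qdrop ν (cl i)) '' {i | cl i ν ∈ B}).ncard = 2 ^ r := by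
  -- injectivity on each class
  have inj : ∀ (C : Set ℤ), (∀ a ∈ C, ∀ b ∈ C, a - b ≠ 1) →
      Set.InjOn (fun i => qdrop ν (cl i)) {i | cl i ν ∈ C} := by
    intro C hC
    have step : ∀ i ∈ {i | cl i ν ∈ C}, ∀ j ∈ {i | cl i ν ∈ C}, i < j →
        qdrop ν (cl i) ≠ qdrop ν (cl j) := by
      intro i hi j hj hlt heq
      obtain ⟨μ, hμ⟩ := h i j hlt
      have hμν : μ ≠ ν := by
        rintro rfl
        exact hC _ hj _ hi hμ
      obtain ⟨μ', hμ'⟩ := Fin.exists_succAbove_eq hμν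
      have h3 := congrFun heq μ'
      simp only [qdrop, hμ'] at h3
      omega
    intro i hi j hj hij
    rcases lt_trichotomy i j with hlt | heq | hgt
    · exact absurd hij (step i hi j hj hlt)
    · exact heq
    · exact absurd hij.symm (step j hj i hi hgt)
  have exc : ∀ (C : Set ℤ), (∀ a ∈ C, ∀ b ∈ C, a - b ≠ 1) →
      {i | cl i ν ∈ C}.ncard ≤ 2 ^ r := by
    intro C hC
    apply exc_bound r _ (fun i => qdrop ν (cl i))
    intro i hi j hj hij
    obtain ⟨μ, hμ⟩ := h i j hij
    have hμν : μ ≠ ν := by rintro rfl; exact hC _ hj _ hi hμ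
    obtain ⟨μ', hμ'⟩ := Fin.exists_succAbove_eq hμν
    exact ⟨μ', by simpa [qdrop, hμ'] using hμ⟩
  have hdisj : Disjoint {i | cl i ν ∈ A} {i | cl i ν ∈ B} := by
    rw [Set.disjoint_left]
    intro i hi hib
    exact Set.disjoint_left.mp hAB hi hib
  have hcov : {i | cl i ν ∈ A} ∪ {i | cl i ν ∈ B} = Set.univ := by
    ext i; simpa using hcl i
  have hsum : {i | cl i ν ∈ A}.ncard + {i | cl i ν ∈ B}.ncard = 2 ^ (r + 1) := by
    rw [← Set.ncard_union_eq hdisj, hcov, Set.ncard_univ]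
    simp
  have hAcard : {i | cl i ν ∈ A}.ncard = 2 ^ r ∧ {i | cl i ν ∈ B}.ncard = 2 ^ r := by
    have := exc A hA
    have := exc B hB
    constructor <;> omega
  rw [Set.ncard_image_of_injOn (inj A hA), Set.ncard_image_of_injOn (inj B hB)]
  exact hAcard
end

section
/- Let cl be a maximal exceptional sequence in Z^r and fix a direction ν. Then the sum of |L_c| over even c equals the sum of |L_c| over odd c, each being 2^{r-1}, where L_c = {x ∈ cl : x_ν = c}. -/
open Finset

lemma Fintype.card_filter_apply_eq {ι α : Type*} [Fintype ι] [DecidableEq ι] [Fintype α]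
    [DecidableEq α] (i : ι) (a : α) :
    #{f : ι → α | f i = a} = Fintype.card α ^ (Fintype.card ι - 1) := by
  simpa [Fintype.piFinset_univ] using
    Fintype.card_filter_piFinset_const_eq_of_mem (univ : Finset α) i (mem_univ a)

namespace IsExceptional

def parity {r m : ℕ} (cl : Fin m → Fin r → ℤ) (i : Fin m) : Fin r → ZMod 2 :=
  fun μ => (cl i μ : ZMod 2)

variable {r m : ℕ} {cl : Fin m → Fin r → ℤ}

lemma parity_ne_of_lt (h : IsExceptional cl) {i j : Fin m} (hij : i < j) :
    parity cl i ≠ parity cl j := by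
  intro heq
  obtain ⟨μ, hμ⟩ := h i j hij
  have hsub : (cl j μ : ZMod 2) - cl i μ = 1 := by rw [← Int.cast_sub, hμ, Int.cast_one]
  rw [show (cl i μ : ZMod 2) = cl j μ from congrFun heq μ, sub_self] at hsub
  exact zero_ne_one hsub

lemma injective_parity (h : IsExceptional cl) : Function.Injective (parity cl) := by
  intro i j hij
  by_contra hne
  rcases lt_or_gt_of_ne hne with hlt | hlt
  · exact h.parity_ne_of_lt hlt hij
  · exact h.parity_ne_of_lt hlt hij.symm

lemma bijective_parity {cl : Fin (2 ^ r) → Fin r → ℤ} (h : IsExceptional cl) :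
    Function.Bijective (parity cl) :=
  (Fintype.bijective_iff_injective_and_card _).2 ⟨h.injective_parity, by simp⟩

lemma card_filter_parity_apply_eq {cl : Fin (2 ^ (r + 1)) → Fin (r + 1) → ℤ}
    (h : IsExceptional cl) (ν : Fin (r + 1)) (a : ZMod 2) :
    #{i | (cl i ν : ZMod 2) = a} = 2 ^ r := by
  rw [card_bijective _ h.bijective_parity (t := {v | v ν = a}) (by simp [parity]),
    Fintype.card_filter_apply_eq]
  simp

end IsExceptional

theorem stmt_4 {r : ℕ} (cl : Fin (2 ^ (r + 1)) → (Fin (r + 1) → ℤ))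
    (h : IsExceptional cl) (ν : Fin (r + 1)) :
    (Finset.univ.filter fun i => Even (cl i ν)).card = 2 ^ r ∧
    (Finset.univ.filter fun i => Odd (cl i ν)).card = 2 ^ r := by
  simp_rw [← ZMod.intCast_eq_zero_iff_even, ← ZMod.intCast_eq_one_iff_odd]
  exact ⟨h.card_filter_parity_apply_eq ν 0, h.card_filter_parity_apply_eq ν 1⟩
end

section
/- Let cl be a maximal exceptional sequence in Z^r, fix a direction ν, and set ℓ_c = |{x ∈ cl : x_ν = c}|. Then for every b ∈ Z, ℓ_b ≤ ℓ_{b-1} + ℓ_{b+1}. -/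
/-- The number of points of the sequence whose `ν`-th coordinate equals `c`. -/
def layerCard {r m : ℕ} (cl : Fin m → (Fin r → ℤ)) (ν : Fin r) (c : ℤ) : ℕ :=
  (Finset.univ.filter fun i => cl i ν = c).card

/-- Any family whose pairwise "exceptionality witnesses" live in a finset `V`
of coordinates has at most `2 ^ V.card` members. -/
lemma exc_card_le {r m : ℕ} (cl : Fin m → (Fin r → ℤ)) (V : Finset (Fin r)) :
    ∀ T : Finset (Fin m), (∀ i ∈ T, ∀ j ∈ T, i < j → ∃ μ ∈ V, cl j μ - cl i μ = 1) →
    T.card ≤ 2 ^ V.card := by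
  induction V using Finset.induction_on with
  | empty =>
      intro T hT
      simp only [Finset.card_empty, pow_zero]
      refine Finset.card_le_one.mpr ?_
      intro a ha c hc
      by_contra hne
      rcases lt_or_gt_of_ne hne with hlt | hgt
      · obtain ⟨μ, hμ, -⟩ := hT a ha c hc hlt
        exact absurd hμ (by simp)
      · obtain ⟨μ, hμ, -⟩ := hT c hc a ha hgt
        exact absurd hμ (by simp)
  | @insert ν V' hν ih =>
      intro T hT
      have h0 : ∀ i ∈ T.filter (fun i => cl i ν % 2 = 0),
          ∀ j ∈ T.filter (fun i => cl i ν % 2 = 0), i < j →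
          ∃ μ ∈ V', cl j μ - cl i μ = 1 := by
        intro i hi j hj hij
        obtain ⟨hi1, hi2⟩ := Finset.mem_filter.mp hi
        obtain ⟨hj1, hj2⟩ := Finset.mem_filter.mp hj
        obtain ⟨μ, hμ, hdiff⟩ := hT i hi1 j hj1 hij
        rcases Finset.mem_insert.mp hμ with rfl | hμ'
        · exfalso; omega
        · exact ⟨μ, hμ', hdiff⟩
      have h1 : ∀ i ∈ T.filter (fun i => ¬ cl i ν % 2 = 0),
          ∀ j ∈ T.filter (fun i => ¬ cl i ν % 2 = 0), i < j →
          ∃ μ ∈ V', cl j μ - cl i μ = 1 := by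
        intro i hi j hj hij
        obtain ⟨hi1, hi2⟩ := Finset.mem_filter.mp hi
        obtain ⟨hj1, hj2⟩ := Finset.mem_filter.mp hj
        obtain ⟨μ, hμ, hdiff⟩ := hT i hi1 j hj1 hij
        rcases Finset.mem_insert.mp hμ with rfl | hμ'
        · exfalso; omega
        · exact ⟨μ, hμ', hdiff⟩
      have c0 := ih _ h0
      have c1 := ih _ h1
      have hsplit : (T.filter (fun i => cl i ν % 2 = 0)).card +
          (T.filter (fun i => ¬ cl i ν % 2 = 0)).card = T.card :=
        Finset.card_filter_add_card_filter_not _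
      have hcard : (insert ν V').card = V'.card + 1 := Finset.card_insert_of_notMem hν
      rw [hcard]
      have hpow : 2 ^ (V'.card + 1) = 2 ^ V'.card * 2 := pow_succ 2 V'.card
      omega

theorem stmt_5 {r : ℕ} (cl : Fin (2 ^ r) → (Fin r → ℤ)) (h : IsExceptional cl)
    (ν : Fin r) (b : ℤ) :
    layerCard cl ν b ≤ layerCard cl ν (b - 1) + layerCard cl ν (b + 1) := by
  classical
  have hr : 0 < r := ν.pos
  set V : Finset (Fin r) := Finset.univ.erase ν with hV
  have hVcard : V.card = r - 1 := by
    rw [hV, Finset.card_erase_of_mem (Finset.mem_univ ν), Finset.card_univ, Fintype.card_fin]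
  -- same parity class A, opposite parity class P
  set A : Finset (Fin (2 ^ r)) := Finset.univ.filter (fun i => cl i ν % 2 = b % 2) with hAdef
  set P : Finset (Fin (2 ^ r)) := Finset.univ.filter (fun i => ¬ cl i ν % 2 = b % 2) with hPdef
  set B : Finset (Fin (2 ^ r)) := Finset.univ.filter
      (fun i => cl i ν = b ∨ (¬ cl i ν % 2 = b % 2 ∧ ¬ cl i ν = b - 1 ∧ ¬ cl i ν = b + 1))
      with hBdef
  have hA : A.card ≤ 2 ^ (r - 1) := by
    rw [← hVcard]
    apply exc_card_le cl V
    intro i hi j hj hij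
    obtain ⟨-, hi2⟩ := Finset.mem_filter.mp hi
    obtain ⟨-, hj2⟩ := Finset.mem_filter.mp hj
    obtain ⟨μ, hdiff⟩ := h i j hij
    refine ⟨μ, ?_, hdiff⟩
    rw [hV, Finset.mem_erase]
    refine ⟨?_, Finset.mem_univ _⟩
    rintro rfl
    omega
  have hB : B.card ≤ 2 ^ (r - 1) := by
    rw [← hVcard]
    apply exc_card_le cl V
    intro i hi j hj hij
    obtain ⟨-, hi2⟩ := Finset.mem_filter.mp hi
    obtain ⟨-, hj2⟩ := Finset.mem_filter.mp hj
    obtain ⟨μ, hdiff⟩ := h i j hij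
    refine ⟨μ, ?_, hdiff⟩
    rw [hV, Finset.mem_erase]
    refine ⟨?_, Finset.mem_univ _⟩
    rintro rfl
    omega
  have hAP : A.card + P.card = 2 ^ r := by
    rw [hAdef, hPdef]
    rw [Finset.card_filter_add_card_filter_not]
    simp
  have key : B.card + layerCard cl ν (b - 1) + layerCard cl ν (b + 1)
      = layerCard cl ν b + P.card := by
    rw [hBdef, hPdef]
    unfold layerCard
    rw [Finset.card_filter, Finset.card_filter, Finset.card_filter, Finset.card_filter,
      Finset.card_filter]
    rw [← Finset.sum_add_distrib, ← Finset.sum_add_distrib, ← Finset.sum_add_distrib]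
    apply Finset.sum_congr rfl
    intro i _
    split_ifs <;> omega
  have hpow : 2 ^ (r - 1) + 2 ^ (r - 1) = 2 ^ r := by
    have h1 : r - 1 + 1 = r := by omega
    have h2 : 2 ^ (r - 1 + 1) = 2 ^ (r - 1) * 2 := pow_succ 2 (r - 1)
    rw [h1] at h2
    omega
  omega
end

section
/- Let cl be an exceptional sequence in Z^r, fix ν, and let L_a, L_b be two layers (a ≠ b) with |L_a| + |L_b| > 2^{r-1}. Then |b - a| = 1, i.e., the two layers are adjacent. -/
theorem stmt_6 {r m : ℕ} (cl : Fin m → (Fin (r + 1) → ℤ)) (h : IsExceptional cl)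
    (ν : Fin (r + 1)) (a b : ℤ) (hab : a ≠ b)
    (hbig : 2 ^ r < layerCard cl ν a + layerCard cl ν b) :
    |b - a| = 1 := by
  by_contra hne
  have h1 : b - a ≠ 1 := fun hh => hne (by rw [hh]; simp)
  have h2 : a - b ≠ 1 := fun hh => hne (by
    have : b - a = -1 := by linarith
    rw [this]; simp)
  set S : Finset (Fin m) := Finset.univ.filter (fun i => cl i ν = a ∨ cl i ν = b) with hS
  -- key: the parity map on coordinates ≠ ν is injective on S
  have key : ∀ i ∈ S, ∀ j ∈ S,
      (fun μ : {μ : Fin (r+1) // μ ≠ ν} => ((cl i μ : ZMod 2)))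
      = (fun μ : {μ : Fin (r+1) // μ ≠ ν} => ((cl j μ : ZMod 2))) → i = j := by
    intro i hi j hj hf
    by_contra hij
    -- wlog via cases on trichotomy
    have main : ∀ i j : Fin m, i ∈ S → j ∈ S → i < j →
        (fun μ : {μ : Fin (r+1) // μ ≠ ν} => ((cl i μ : ZMod 2)))
        = (fun μ : {μ : Fin (r+1) // μ ≠ ν} => ((cl j μ : ZMod 2))) → False := by
      intro i j hi hj hlt hf
      obtain ⟨μ, hμ⟩ := h i j hlt
      have hμν : μ ≠ ν := by
        intro hμν
        subst hμν
        simp only [hS, Finset.mem_filter] at hi hj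
        rcases hi.2 with hi' | hi' <;> rcases hj.2 with hj' | hj' <;>
          rw [hi', hj'] at hμ <;> omega
      have := congrFun hf ⟨μ, hμν⟩
      simp only at this
      have hcl : cl j μ = cl i μ + 1 := by linarith
      rw [hcl] at this
      push_cast at this
      have : (1 : ZMod 2) = 0 := by linear_combination -this
      exact one_ne_zero this
    rcases lt_trichotomy i j with hlt | heq | hgt
    · exact main i j hi hj hlt hf
    · exact hij heq
    · exact main j i hj hi hgt hf.symm
  have hcardS : S.card ≤ 2 ^ r := by
    have hinj := Finset.card_le_card_of_injOn
      (fun i => (fun μ : {μ : Fin (r+1) // μ ≠ ν} => ((cl i μ : ZMod 2))))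
      (fun i _ => Finset.mem_univ _) (fun i hi j hj => key i hi j hj)
    calc S.card ≤ (Finset.univ : Finset ({μ : Fin (r+1) // μ ≠ ν} → ZMod 2)).card := hinj
    _ = 2 ^ r := by
        rw [Finset.card_univ, Fintype.card_fun]
        congr 1
        rw [Fintype.card_subtype_compl]
        simp
  have hSsplit : S.card = layerCard cl ν a + layerCard cl ν b := by
    rw [hS, layerCard, layerCard, Finset.filter_or]
    apply Finset.card_union_of_disjoint
    rw [Finset.disjoint_filter]
    intro i _ hia hib
    exact hab (hia ▸ hib.symm ▸ rfl)
  omega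
end

section
/- Let cl be a maximal exceptional sequence in Z^r and fix ν. If some layer L_c has the maximal size 2^{r-1}, then the ν-width of cl is at most 3, i.e., all points of cl have ν-th coordinate in {c-1, c, c+1}. -/
theorem stmt_8 {r : ℕ} (cl : Fin (2 ^ (r + 1)) → (Fin (r + 1) → ℤ))
    (h : IsExceptional cl) (ν : Fin (r + 1)) (c : ℤ)
    (hc : layerCard cl ν c = 2 ^ r) :
    ∀ i, cl i ν = c - 1 ∨ cl i ν = c ∨ cl i ν = c + 1 := by
  classical
  set f : Fin (2 ^ (r + 1)) → ({μ : Fin (r + 1) // μ ≠ ν} → ZMod 2) :=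
    fun i μ => ((cl i μ.1 : ℤ) : ZMod 2) with hf
  -- key lemma
  have key : ∀ i j : Fin (2 ^ (r + 1)), i ≠ j →
      cl j ν - cl i ν ≠ 1 → cl i ν - cl j ν ≠ 1 → f i ≠ f j := by
    intro i j hij h1 h2
    have main : ∀ a b : Fin (2 ^ (r + 1)), a < b → cl b ν - cl a ν ≠ 1 →
        f a ≠ f b := by
      intro a b hab hne
      obtain ⟨μ, hμ⟩ := h a b hab
      have hμν : μ ≠ ν := by rintro rfl; exact hne hμ
      intro heq
      have := congrFun heq ⟨μ, hμν⟩
      simp only [hf] at this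
      have hb : cl b μ = cl a μ + 1 := by linarith
      rw [hb] at this
      push_cast at this
      have : (1 : ZMod 2) = 0 := by
        have := add_right_cancel (a := (1 : ZMod 2)) (b := ((cl a μ : ZMod 2)))
          (c := 0) (by rw [add_comm]; simpa using this.symm)
        simpa using this
      exact one_ne_zero this
    rcases lt_or_gt_of_ne hij with hlt | hgt
    · exact main i j hlt h1
    · exact (main j i hgt h2).symm
  set S : Finset (Fin (2 ^ (r + 1))) := Finset.univ.filter fun i => cl i ν = c with hS
  have hmem : ∀ {i}, i ∈ S → cl i ν = c := by
    intro i hi; simpa [hS] using hi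
  have hinj : Set.InjOn f (S : Set (Fin (2 ^ (r + 1)))) := by
    intro i hi j hj hfij
    by_contra hne
    exact key i j hne (by rw [hmem hi, hmem hj]; simp)
      (by rw [hmem hi, hmem hj]; simp) hfij
  have hcard : (S.image f).card = 2 ^ r := by
    rw [Finset.card_image_of_injOn hinj]
    exact hc
  have hcardT : Fintype.card ({μ : Fin (r + 1) // μ ≠ ν} → ZMod 2) = 2 ^ r := by
    rw [Fintype.card_fun]
    congr 1
    rw [Fintype.card_subtype_compl]
    simp
  have hsurj : S.image f = Finset.univ := by
    apply Finset.eq_univ_of_card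
    rw [hcard, hcardT]
  intro i
  by_contra hcon
  push_neg at hcon
  obtain ⟨h1, h2, h3⟩ := hcon
  have : f i ∈ S.image f := by rw [hsurj]; exact Finset.mem_univ _
  obtain ⟨j, hj, hfj⟩ := Finset.mem_image.mp this
  have hji : j ≠ i := by
    intro heq; subst heq; exact h2 (hmem hj)
  refine key j i hji ?_ ?_ hfj
  · rw [hmem hj]; intro hh; exact h3 (by linarith)
  · rw [hmem hj]; intro hh; exact h1 (by linarith)
end

section
/- Let cl be a maximal exceptional sequence in Z^r and fix ν. If the ν-width of cl is at most 3, then cl contains a layer L_c of maximal size 2^{r-1}. -/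
theorem stmt_9 {r : ℕ} (cl : Fin (2 ^ (r + 1)) → (Fin (r + 1) → ℤ))
    (h : IsExceptional cl) (ν : Fin (r + 1))
    (hw : ∀ i j, cl i ν - cl j ν ≤ 2) :
    ∃ c : ℤ, layerCard cl ν c = 2 ^ r := by
  classical
  haveI : NeZero (2 ^ (r + 1)) := ⟨by positivity⟩
  set p : Fin (2 ^ (r + 1)) → (Fin (r + 1) → ZMod 2) :=
    fun i μ => ((cl i μ : ℤ) : ZMod 2) with hpdef
  clear_value p
  -- injectivity of the parity map
  have key : ∀ i j : Fin (2 ^ (r + 1)), i < j → p i ≠ p j := by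
    intro i j hij heq
    obtain ⟨μ, hμ⟩ := h i j hij
    have h1 : cl j μ = cl i μ + 1 := by linarith
    have h2 : p j μ = p i μ + 1 := by
      simp only [hpdef, h1]; push_cast; ring
    rw [← heq] at h2
    simp at h2
  have hp : Function.Injective p := by
    intro i j hij
    by_contra hne
    rcases Ne.lt_or_gt hne with h' | h'
    · exact key i j h' hij
    · exact key j i h' hij.symm
  have hcard : Fintype.card (Fin (2 ^ (r + 1))) = Fintype.card (Fin (r + 1) → ZMod 2) := by
    simp
  have hbij : Function.Bijective p :=
    (Fintype.bijective_iff_injective_and_card p).2 ⟨hp, hcard⟩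
  -- the two parity classes in the target each have size 2^r
  have hswap : ((Finset.univ.filter fun v : Fin (r + 1) → ZMod 2 => v ν = 0)).card
      = ((Finset.univ.filter fun v : Fin (r + 1) → ZMod 2 => v ν = 1)).card := by
    apply Finset.card_bij (fun v _ => Function.update v ν (v ν + 1))
    · intro v hv
      simp only [Finset.mem_filter, Finset.mem_univ, true_and] at hv ⊢
      rw [Function.update_self, hv]
      decide
    · intro v hv w hw hvw
      funext μ
      by_cases hμ : μ = ν
      · subst hμ
        have := congrFun hvw μ
        rw [Function.update_self, Function.update_self] at this
        exact add_right_cancel this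
      · have := congrFun hvw μ
        rwa [Function.update_of_ne hμ, Function.update_of_ne hμ] at this
    · intro w hw
      simp only [Finset.mem_filter, Finset.mem_univ, true_and] at hw
      refine ⟨Function.update w ν (w ν + 1), ?_, ?_⟩
      · simp only [Finset.mem_filter, Finset.mem_univ, true_and, Function.update_self]
        rw [hw]; decide
      · funext μ
        by_cases hμ : μ = ν
        · subst hμ
          simp only [Function.update_self]
          rw [hw]; decide
        · simp only [Function.update_of_ne hμ]
  have hfe : (Finset.univ.filter fun v : Fin (r + 1) → ZMod 2 => v ν = 1)
      = (Finset.univ.filter fun v : Fin (r + 1) → ZMod 2 => ¬ v ν = 0) := by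
    apply Finset.filter_congr
    intro v _
    have : ∀ a : ZMod 2, a = 1 ↔ ¬ a = 0 := by decide
    exact this (v ν)
  have htot : ((Finset.univ.filter fun v : Fin (r + 1) → ZMod 2 => v ν = 0)).card
      + ((Finset.univ.filter fun v : Fin (r + 1) → ZMod 2 => v ν = 1)).card = 2 ^ (r + 1) := by
    rw [hfe]
    rw [Finset.card_filter_add_card_filter_not]
    rw [Finset.card_univ]
    simp
  have hpow : (2 : ℕ) ^ (r + 1) = 2 ^ r + 2 ^ r := by ring
  have h01 : ∀ A B C : ℕ, A = B → A + B = C + C → A = C ∧ B = C := by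
    clear * -
    intro A B C h1 h2
    omega
  obtain ⟨h0, h1⟩ := h01 _ _ _ hswap (by rw [htot, hpow])
  have hall : ∀ e : ZMod 2,
      ((Finset.univ.filter fun v : Fin (r + 1) → ZMod 2 => v ν = e)).card = 2 ^ r := by
    intro e
    have he : e = 0 ∨ e = 1 := by revert e; decide
    rcases he with he | he <;> subst he
    · exact h0
    · exact h1
  -- pull back along the bijection p
  have hpull : ∀ e : ZMod 2, ((Finset.univ.filter fun i => p i ν = e)).card
      = ((Finset.univ.filter fun v : Fin (r + 1) → ZMod 2 => v ν = e)).card := by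
    intro e
    apply Finset.card_bij (fun i _ => p i)
    · intro i hi
      simp only [Finset.mem_filter, Finset.mem_univ, true_and] at hi ⊢
      exact hi
    · intro i _ j _ hij
      exact hp hij
    · intro v hv
      obtain ⟨i, hi⟩ := hbij.2 v
      simp only [Finset.mem_filter, Finset.mem_univ, true_and] at hv
      exact ⟨i, by simp only [Finset.mem_filter, Finset.mem_univ, true_and]; rw [hi]; exact hv, hi⟩
  -- take the minimum value b in direction ν
  obtain ⟨i0, -, hmin⟩ := Finset.exists_min_image Finset.univ (fun i => cl i ν)
    ⟨0, Finset.mem_univ 0⟩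
  set b : ℤ := cl i0 ν with hb
  -- the layer b+1 equals the parity class of b+1
  have hset : (Finset.univ.filter fun i => cl i ν = b + 1)
      = (Finset.univ.filter fun i => p i ν = ((b + 1 : ℤ) : ZMod 2)) := by
    ext i
    simp only [Finset.mem_filter, Finset.mem_univ, true_and, hpdef]
    constructor
    · intro hx; rw [hx]
    · intro hx
      have hlo : b ≤ cl i ν := hmin i (Finset.mem_univ i)
      have hhi : cl i ν ≤ b + 2 := by have := hw i i0; linarith
      have hcases : cl i ν = b ∨ cl i ν = b + 1 ∨ cl i ν = b + 2 := by
        clear * - hlo hhi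
        omega
      rcases hcases with hc | hc | hc
      · exfalso
        rw [hc] at hx
        push_cast at hx
        simp at hx
      · exact hc
      · exfalso
        rw [hc] at hx
        push_cast at hx
        have := add_left_cancel hx
        revert this; decide
  refine ⟨b + 1, ?_⟩
  unfold layerCard
  rw [hset, hpull, hall]
end

section
/- Let S ⊆ Z^r and let S' be obtained from S by inserting empty layers: fix ν and m ≥ 1, and assume the hyperplane {x_ν = 0} contains no point of S; define S' by shifting all points with x_ν < 0 by −m·e_ν and keeping the rest. Then S contaminates all of Z^r if and only if S' contaminates all of Z^r, under the rule that two adjacent lattice points infect the whole coordinate line through them. -/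
def cont {r : ℕ} (S : Set (Fin r → ℤ)) : Set (Fin r → ℤ) :=
  S ∪ {x | ∃ ν : Fin r, ∃ p ∈ S, p + Pi.single ν 1 ∈ S ∧
        ∃ t : ℤ, x = p + t • Pi.single ν 1}

def contInf {r : ℕ} (S : Set (Fin r → ℤ)) : Set (Fin r → ℤ) :=
  ⋃ k : ℕ, cont^[k] S

/-! ### Auxiliary machinery -/

def eV {r : ℕ} (ν : Fin r) : Fin r → ℤ := Pi.single ν 1

@[simp] lemma eV_apply_self {r : ℕ} (ν : Fin r) (x : Fin r → ℤ) (t : ℤ) :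
    (x + t • eV ν) ν = x ν + t := by
  simp [eV]

@[simp] lemma eV_apply_add_one {r : ℕ} (ν : Fin r) (x : Fin r → ℤ) :
    (x + eV ν) ν = x ν + 1 := by
  simp [eV]

lemma eV_apply_ne {r : ℕ} {ν μ : Fin r} (h : μ ≠ ν) (x : Fin r → ℤ) (t : ℤ) :
    (x + t • eV ν) μ = x μ := by
  simp [eV, Pi.single_eq_of_ne h]

lemma eV_apply_ne' {r : ℕ} {ν μ : Fin r} (h : μ ≠ ν) (x : Fin r → ℤ) :
    (x + eV ν) μ = x μ := by
  simp [eV, Pi.single_eq_of_ne h]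

lemma shift_line {r : ℕ} {ν : Fin r} (p : Fin r → ℤ) {a b c : ℤ} (h : a + b = c) :
    p + a • eV ν + b • eV ν = p + c • eV ν := by
  rw [add_assoc, ← add_smul, h]

lemma shift_line1 {r : ℕ} {ν : Fin r} (p : Fin r → ℤ) {b c : ℤ} (h : 1 + b = c) :
    p + eV ν + b • eV ν = p + c • eV ν := by
  have := shift_line (ν := ν) p (a := 1) h
  rwa [one_smul] at this

lemma swap_add {r : ℕ} {ν μ : Fin r} (p : Fin r → ℤ) (a b : ℤ) :
    p + a • eV ν + b • eV μ = p + b • eV μ + a • eV ν := by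
  abel

lemma swap_add1 {r : ℕ} {ν μ : Fin r} (p : Fin r → ℤ) (a : ℤ) :
    p + a • eV ν + eV μ = p + eV μ + a • eV ν := by
  abel

/-- A set closed under the contamination rule. -/
def IsCl {r : ℕ} (T : Set (Fin r → ℤ)) : Prop :=
  ∀ (μ : Fin r) (p : Fin r → ℤ), p ∈ T → p + eV μ ∈ T →
    ∀ t : ℤ, p + t • eV μ ∈ T

lemma subset_contInf {r : ℕ} (S : Set (Fin r → ℤ)) : S ⊆ contInf S :=
  fun x hx => Set.mem_iUnion.2 ⟨0, hx⟩

lemma cont_mono {r : ℕ} {S T : Set (Fin r → ℤ)} (h : S ⊆ T) : cont S ⊆ cont T := by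
  intro x hx
  rcases hx with hx | ⟨ν, p, hp, hq, t, ht⟩
  · exact Or.inl (h hx)
  · exact Or.inr ⟨ν, p, h hp, h hq, t, ht⟩

lemma subset_cont {r : ℕ} (S : Set (Fin r → ℤ)) : S ⊆ cont S :=
  Set.subset_union_left

lemma iter_le {r : ℕ} (S : Set (Fin r → ℤ)) {k l : ℕ} (h : k ≤ l) :
    cont^[k] S ⊆ cont^[l] S := by
  induction l with
  | zero =>
    have : k = 0 := Nat.le_zero.mp h
    subst this; exact subset_rfl
  | succ n ih =>
    rcases Nat.lt_or_ge k (n + 1) with h' | h'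
    · have h1 := ih (Nat.lt_succ_iff.mp h')
      rw [Function.iterate_succ_apply']
      exact h1.trans (subset_cont _)
    · have : k = n + 1 := le_antisymm h h'
      subst this; exact subset_rfl

lemma isCl_contInf {r : ℕ} (S : Set (Fin r → ℤ)) : IsCl (contInf S) := by
  intro μ p hp hq t
  obtain ⟨a, ha⟩ := Set.mem_iUnion.1 hp
  obtain ⟨b, hb⟩ := Set.mem_iUnion.1 hq
  have ha' : p ∈ cont^[max a b] S := iter_le S (le_max_left a b) ha
  have hb' : p + eV μ ∈ cont^[max a b] S := iter_le S (le_max_right a b) hb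
  refine Set.mem_iUnion.2 ⟨max a b + 1, ?_⟩
  rw [Function.iterate_succ_apply']
  exact Or.inr ⟨μ, p, ha', hb', t, rfl⟩

lemma iter_subset {r : ℕ} {S T : Set (Fin r → ℤ)} (hT : IsCl T) (h : S ⊆ T) :
    ∀ k, cont^[k] S ⊆ T := by
  intro k
  induction k with
  | zero => exact h
  | succ n ih =>
    rw [Function.iterate_succ_apply']
    rintro x (hx | ⟨μ, p, hp, hq, t, rfl⟩)
    · exact ih hx
    · exact hT μ p (ih hp) (ih hq) t

lemma contInf_min {r : ℕ} {S T : Set (Fin r → ℤ)} (hT : IsCl T) (h : S ⊆ T) :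
    contInf S ⊆ T := by
  intro x hx
  obtain ⟨k, hk⟩ := Set.mem_iUnion.1 hx
  exact iter_subset hT h k hk

lemma contInf_univ_iff {r : ℕ} (S : Set (Fin r → ℤ)) :
    contInf S = Set.univ ↔ ∀ T, IsCl T → S ⊆ T → T = Set.univ := by
  constructor
  · intro h T hT hS
    exact Set.eq_univ_of_univ_subset (h ▸ contInf_min hT hS)
  · intro h
    exact h _ (isCl_contInf S) (subset_contInf S)

/-! ### The stretched set σ (used in the direction S' ⇝ S) -/

def sigmaSet {r : ℕ} (ν : Fin r) (m : ℕ) (T : Set (Fin r → ℤ)) : Set (Fin r → ℤ) :=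
  {x | (0 ≤ x ν → x ∈ T) ∧
       (-(m : ℤ) ≤ x ν → x ν ≤ -1 → ∀ s : ℤ, x + s • eV ν ∈ T) ∧
       (x ν < -(m : ℤ) → x + (m : ℤ) • eV ν ∈ T)}

lemma mem_sigmaSet {r : ℕ} {ν : Fin r} {m : ℕ} {T : Set (Fin r → ℤ)} {x : Fin r → ℤ} :
    x ∈ sigmaSet ν m T ↔
      (0 ≤ x ν → x ∈ T) ∧
      (-(m : ℤ) ≤ x ν → x ν ≤ -1 → ∀ s : ℤ, x + s • eV ν ∈ T) ∧
      (x ν < -(m : ℤ) → x + (m : ℤ) • eV ν ∈ T) := Iff.rfl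

lemma line_mem_sigmaSet {r : ℕ} {ν : Fin r} {m : ℕ} {T : Set (Fin r → ℤ)}
    (p : Fin r → ℤ) (hp : ∀ s : ℤ, p + s • eV ν ∈ T) (t : ℤ) :
    p + t • eV ν ∈ sigmaSet ν m T := by
  refine ⟨fun _ => hp t, fun _ _ s => ?_, fun _ => ?_⟩
  · rw [shift_line p rfl]; exact hp _
  · rw [shift_line p rfl]; exact hp _

lemma isCl_sigmaSet {r : ℕ} {ν : Fin r} {m : ℕ} (hm : 1 ≤ m) {T : Set (Fin r → ℤ)}
    (hT : IsCl T) : IsCl (sigmaSet ν m T) := by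
  intro μ p hp hq t
  obtain ⟨hp1, hp2, hp3⟩ := mem_sigmaSet.1 hp
  obtain ⟨hq1, hq2, hq3⟩ := mem_sigmaSet.1 hq
  by_cases hμν : μ = ν
  · subst hμν
    have hqν : (p + eV μ) μ = p μ + 1 := eV_apply_add_one μ p
    have Lfull : ∀ s : ℤ, p + s • eV μ ∈ T := by
      by_cases c1 : 0 ≤ p μ
      · exact hT μ p (hp1 c1) (hq1 (by omega))
      by_cases c2 : -(m : ℤ) ≤ p μ
      · exact hp2 c2 (by omega)
      by_cases c3 : p μ = -(m : ℤ) - 1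
      · intro s
        have h := hq2 (by omega) (by omega) (s - 1)
        rwa [shift_line1 p (show 1 + (s - 1) = s by ring)] at h
      · have hA := hp3 (by omega)
        have hB := hq3 (by omega)
        have hB' : p + (m : ℤ) • eV μ + eV μ ∈ T := by
          rw [swap_add1]; exact hB
        intro s
        have h := hT μ _ hA hB' (s - (m : ℤ))
        rwa [shift_line p (show (m : ℤ) + (s - (m : ℤ)) = s by ring)] at h
    exact line_mem_sigmaSet p Lfull t
  · have hne : ν ≠ μ := fun h => hμν h.symm
    have l1 : ∀ u : ℤ, (p + u • eV μ) ν = p ν := fun u => eV_apply_ne hne p u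
    have l2 : (p + eV μ) ν = p ν := eV_apply_ne' hne p
    refine ⟨?_, ?_, ?_⟩
    · intro h1; rw [l1] at h1
      exact hT μ p (hp1 h1) (hq1 (by rw [l2]; exact h1)) t
    · intro h1 h2 s
      rw [l1] at h1 h2
      have hA := hp2 h1 h2 s
      have hB := hq2 (by rw [l2]; exact h1) (by rw [l2]; exact h2) s
      have hB' : p + s • eV ν + eV μ ∈ T := by
        rw [swap_add1]; exact hB
      have h := hT μ _ hA hB' t
      rwa [swap_add] at h
    · intro h1; rw [l1] at h1
      have hA := hp3 h1
      have hB := hq3 (by rw [l2]; exact h1)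
      have hB' : p + (m : ℤ) • eV ν + eV μ ∈ T := by
        rw [swap_add1]; exact hB
      have h := hT μ _ hA hB' t
      rwa [swap_add] at h

/-! ### The collapsed set τ (used in the direction S ⇝ S') -/

def tauSet {r : ℕ} (ν : Fin r) (m : ℕ) (T' : Set (Fin r → ℤ)) : Set (Fin r → ℤ) :=
  {y | (0 ≤ y ν → y ∈ T') ∧ (y ν ≤ 0 → y + (-(m : ℤ)) • eV ν ∈ T')}

lemma mem_tauSet {r : ℕ} {ν : Fin r} {m : ℕ} {T' : Set (Fin r → ℤ)} {y : Fin r → ℤ} :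
    y ∈ tauSet ν m T' ↔
      (0 ≤ y ν → y ∈ T') ∧ (y ν ≤ 0 → y + (-(m : ℤ)) • eV ν ∈ T') := Iff.rfl

lemma line_mem_tauSet {r : ℕ} {ν : Fin r} {m : ℕ} {T' : Set (Fin r → ℤ)}
    (p : Fin r → ℤ) (hp : ∀ s : ℤ, p + s • eV ν ∈ T') (t : ℤ) :
    p + t • eV ν ∈ tauSet ν m T' := by
  refine ⟨fun _ => hp t, fun _ => ?_⟩
  rw [shift_line p rfl]; exact hp _

lemma isCl_tauSet {r : ℕ} {ν : Fin r} {m : ℕ} {T' : Set (Fin r → ℤ)}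
    (hT' : IsCl T') : IsCl (tauSet ν m T') := by
  intro μ p hp hq t
  obtain ⟨hp1, hp2⟩ := mem_tauSet.1 hp
  obtain ⟨hq1, hq2⟩ := mem_tauSet.1 hq
  by_cases hμν : μ = ν
  · subst hμν
    have hqν : (p + eV μ) μ = p μ + 1 := eV_apply_add_one μ p
    have Lfull : ∀ s : ℤ, p + s • eV μ ∈ T' := by
      by_cases c1 : 0 ≤ p μ
      · exact hT' μ p (hp1 c1) (hq1 (by omega))
      · have hA := hp2 (by omega)
        have hB := hq2 (by omega)
        have hB' : p + (-(m : ℤ)) • eV μ + eV μ ∈ T' := by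
          rw [swap_add1]; exact hB
        intro s
        have h := hT' μ _ hA hB' (s + (m : ℤ))
        rwa [shift_line p (show -(m : ℤ) + (s + (m : ℤ)) = s by ring)] at h
    exact line_mem_tauSet p Lfull t
  · have hne : ν ≠ μ := fun h => hμν h.symm
    have l1 : ∀ u : ℤ, (p + u • eV μ) ν = p ν := fun u => eV_apply_ne hne p u
    have l2 : (p + eV μ) ν = p ν := eV_apply_ne' hne p
    refine ⟨?_, ?_⟩
    · intro h1; rw [l1] at h1
      exact hT' μ p (hp1 h1) (hq1 (by rw [l2]; exact h1)) t
    · intro h1; rw [l1] at h1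
      have hA := hp2 h1
      have hB := hq2 (by rw [l2]; exact h1)
      have hB' : p + (-(m : ℤ)) • eV ν + eV μ ∈ T' := by
        rw [swap_add1]; exact hB
      have h := hT' μ _ hA hB' t
      rwa [swap_add] at h

/-! ### Main theorem -/

theorem stmt_15 {r : ℕ} (S : Set (Fin r → ℤ)) (ν : Fin r) (m : ℕ) (hm : 1 ≤ m)
    (h0 : ∀ x ∈ S, x ν ≠ 0) :
    contInf S = Set.univ ↔
    contInf ((fun x : Fin r → ℤ =>
        if x ν < 0 then x - (m : ℤ) • Pi.single ν 1 else x) '' S) = Set.univ := by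
  have hsub : ∀ x : Fin r → ℤ, x - (m : ℤ) • Pi.single ν 1 = x + (-(m : ℤ)) • eV ν := by
    intro x
    rw [neg_smul, ← sub_eq_add_neg]
    rfl
  rw [contInf_univ_iff, contInf_univ_iff]
  constructor
  · -- S contaminates ⇒ S' contaminates
    intro hAll T' hT' hS'
    have hτ : tauSet ν m T' = Set.univ := by
      refine hAll _ (isCl_tauSet hT') ?_
      intro s hs
      have hs0 := h0 s hs
      by_cases hneg : s ν < 0
      · have hmem : s - (m : ℤ) • Pi.single ν 1 ∈ T' := by
          refine hS' ⟨s, hs, ?_⟩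
          simp [hneg]
        refine ⟨fun h1 => absurd h1 (by omega), fun _ => ?_⟩
        rw [← hsub]; exact hmem
      · have hmem : s ∈ T' := by
          refine hS' ⟨s, hs, ?_⟩
          simp [hneg]
        exact ⟨fun _ => hmem, fun h1 => absurd h1 (by omega)⟩
    have hall : ∀ y : Fin r → ℤ, y ∈ tauSet ν m T' := by
      intro y; rw [hτ]; trivial
    apply Set.eq_univ_of_forall
    intro x
    have hp1 : x + (-(x ν)) • eV ν ∈ T' :=
      (hall (x + (-(x ν)) • eV ν)).1 (by rw [eV_apply_self]; omega)
    have hp2 : x + (-(x ν)) • eV ν + eV ν ∈ T' :=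
      (hall (x + (-(x ν)) • eV ν + eV ν)).1
        (by rw [eV_apply_add_one, eV_apply_self]; omega)
    have h := hT' ν _ hp1 hp2 (x ν)
    rwa [shift_line x (show -(x ν) + x ν = 0 by ring), zero_smul, add_zero] at h
  · -- S' contaminates ⇒ S contaminates
    intro hAll T hT hST
    have hσ : sigmaSet ν m T = Set.univ := by
      refine hAll _ (isCl_sigmaSet hm hT) ?_
      rintro x ⟨s, hs, rfl⟩
      by_cases hneg : s ν < 0
      · simp only [if_pos hneg, hsub]
        refine ⟨?_, ?_, fun _ => ?_⟩
        · intro h1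
          exfalso; rw [eV_apply_self] at h1; omega
        · intro h1
          exfalso; rw [eV_apply_self] at h1; omega
        · rw [shift_line s (show -(m : ℤ) + (m : ℤ) = 0 by ring), zero_smul, add_zero]
          exact hST hs
      · simp only [if_neg hneg]
        push_neg at hneg
        refine ⟨fun _ => hST hs, fun _ h2 => absurd h2 (by omega), fun h1 => absurd h1 (by omega)⟩
    have hall : ∀ y : Fin r → ℤ, y ∈ sigmaSet ν m T := by
      intro y; rw [hσ]; trivial
    apply Set.eq_univ_of_forall
    intro y
    by_cases hy : 0 ≤ y ν
    · exact (hall y).1 hy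
    · have hc : (y + (-(m : ℤ)) • eV ν) ν < -(m : ℤ) := by
        rw [eV_apply_self]; omega
      have h := (hall (y + (-(m : ℤ)) • eV ν)).2.2 hc
      rwa [shift_line y (show -(m : ℤ) + (m : ℤ) = 0 by ring), zero_smul, add_zero] at h
end

section
/- Let cl be a maximal exceptional sequence in Z^3 (eight points) and fix a direction ν such that no layer in direction ν has 4 points, all inner empty layers in direction ν are isolated (no two consecutive empty layers strictly between nonempty ones), and some layer in direction ν has exactly 3 points. Then the ν-width of cl is at most 6. -/
/-- All inner empty layers in direction `ν` are isolated: there are no two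
consecutive empty layers strictly between nonempty ones. -/
def InnerEmptyIsolated {r m : ℕ} (cl : Fin m → (Fin r → ℤ)) (ν : Fin r) : Prop :=
  ¬ ∃ c : ℤ, layerCard cl ν c = 0 ∧ layerCard cl ν (c + 1) = 0 ∧
      (∃ a < c, layerCard cl ν a ≠ 0) ∧ (∃ b > c + 1, layerCard cl ν b ≠ 0)

set_option maxHeartbeats 1000000 in
set_option synthInstance.maxSize 2000 in
set_option synthInstance.maxHeartbeats 2000000 in
/-- In `(ZMod 2)`-valued vectors on `Fin 3`, there are only four classes of
agreement away from a fixed coordinate `ν`. -/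
lemma zmod_key (ν : Fin 3) (a b c i j : Fin 3 → ZMod 2)
    (hab : ¬(∀ μ, μ ≠ ν → a μ = b μ)) (hac : ¬(∀ μ, μ ≠ ν → a μ = c μ))
    (hbc : ¬(∀ μ, μ ≠ ν → b μ = c μ))
    (hia : ¬(∀ μ, μ ≠ ν → i μ = a μ)) (hib : ¬(∀ μ, μ ≠ ν → i μ = b μ))
    (hic : ¬(∀ μ, μ ≠ ν → i μ = c μ))
    (hja : ¬(∀ μ, μ ≠ ν → j μ = a μ)) (hjb : ¬(∀ μ, μ ≠ ν → j μ = b μ))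
    (hjc : ¬(∀ μ, μ ≠ ν → j μ = c μ)) :
    ∀ μ, μ ≠ ν → i μ = j μ := by
  revert ν a b c i j
  decide

/-- If two distinct members of an exceptional sequence agree mod 2 in every
coordinate other than `ν`, then their `ν`-coordinates differ by exactly one. -/
lemma lemP (cl : Fin 8 → (Fin 3 → ℤ)) (h : IsExceptional cl) (ν : Fin 3)
    (i j : Fin 8) (hij : i ≠ j)
    (hpar : ∀ μ, μ ≠ ν → ((cl i μ : ZMod 2) = (cl j μ : ZMod 2))) :
    cl i ν - cl j ν = 1 ∨ cl j ν - cl i ν = 1 := by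
  rcases lt_or_gt_of_ne hij with hlt | hlt
  · obtain ⟨μ, hμ⟩ := h i j hlt
    by_cases hν : μ = ν
    · subst hν; right; exact hμ
    · exfalso
      have h2 : ((cl j μ - cl i μ : ℤ) : ZMod 2) = ((1 : ℤ) : ZMod 2) := by rw [hμ]
      push_cast at h2
      rw [hpar μ hν] at h2
      simp at h2
  · obtain ⟨μ, hμ⟩ := h j i hlt
    by_cases hν : μ = ν
    · subst hν; left; exact hμ
    · exfalso
      have h2 : ((cl i μ - cl j μ : ℤ) : ZMod 2) = ((1 : ℤ) : ZMod 2) := by rw [hμ]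
      push_cast at h2
      rw [hpar μ hν] at h2
      simp at h2

theorem stmt_16 (cl : Fin 8 → (Fin 3 → ℤ)) (h : IsExceptional cl) (ν : Fin 3)
    (h4 : ∀ c : ℤ, layerCard cl ν c ≠ 4)
    (hiso : InnerEmptyIsolated cl ν)
    (h3 : ∃ c : ℤ, layerCard cl ν c = 3) :
    ∀ i j, cl i ν - cl j ν ≤ 5 := by
  classical
  obtain ⟨c, hc⟩ := h3
  -- extract the three points of the 3-layer
  obtain ⟨t1, t2, t3, h12, h13, h23, hset⟩ := Finset.card_eq_three.mp hc
  have hmem : ∀ k : Fin 8, cl k ν = c ↔ k ∈ ({t1, t2, t3} : Finset (Fin 8)) := by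
    intro k
    rw [← hset, Finset.mem_filter]
    simp
  have hv1 : cl t1 ν = c := (hmem t1).mpr (by simp)
  have hv2 : cl t2 ν = c := (hmem t2).mpr (by simp)
  have hv3 : cl t3 ν = c := (hmem t3).mpr (by simp)
  -- parity function
  set g : Fin 8 → (Fin 3 → ZMod 2) := fun k μ => ((cl k μ : ℤ) : ZMod 2) with hg
  have hP : ∀ i j : Fin 8, i ≠ j → (∀ μ, μ ≠ ν → g i μ = g j μ) →
      cl i ν - cl j ν = 1 ∨ cl j ν - cl i ν = 1 := by
    intro i j hij hpar
    exact lemP cl h ν i j hij hpar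
  -- the three layer points have pairwise distinct parity classes
  have hE12 : ¬(∀ μ, μ ≠ ν → g t1 μ = g t2 μ) := by
    intro hE
    rcases hP t1 t2 h12 hE with h' | h' <;> omega
  have hE13 : ¬(∀ μ, μ ≠ ν → g t1 μ = g t3 μ) := by
    intro hE
    rcases hP t1 t3 h13 hE with h' | h' <;> omega
  have hE23 : ¬(∀ μ, μ ≠ ν → g t2 μ = g t3 μ) := by
    intro hE
    rcases hP t2 t3 h23 hE with h' | h' <;> omega
  -- classification of all points
  have hclass : ∀ k : Fin 8, (c - 1 ≤ cl k ν ∧ cl k ν ≤ c + 1) ∨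
      (¬(∀ μ, μ ≠ ν → g k μ = g t1 μ) ∧ ¬(∀ μ, μ ≠ ν → g k μ = g t2 μ) ∧
       ¬(∀ μ, μ ≠ ν → g k μ = g t3 μ)) := by
    intro k
    by_cases hk1 : ∀ μ, μ ≠ ν → g k μ = g t1 μ
    · left
      by_cases hkeq : k = t1
      · subst hkeq; omega
      · rcases hP k t1 hkeq hk1 with h' | h' <;> omega
    by_cases hk2 : ∀ μ, μ ≠ ν → g k μ = g t2 μ
    · left
      by_cases hkeq : k = t2
      · subst hkeq; omega
      · rcases hP k t2 hkeq hk2 with h' | h' <;> omega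
    by_cases hk3 : ∀ μ, μ ≠ ν → g k μ = g t3 μ
    · left
      by_cases hkeq : k = t3
      · subst hkeq; omega
      · rcases hP k t3 hkeq hk3 with h' | h' <;> omega
    right
    exact ⟨hk1, hk2, hk3⟩
  -- two "fourth class" points are equal or differ by one
  have hF : ∀ k l : Fin 8,
      (¬(∀ μ, μ ≠ ν → g k μ = g t1 μ) ∧ ¬(∀ μ, μ ≠ ν → g k μ = g t2 μ) ∧
       ¬(∀ μ, μ ≠ ν → g k μ = g t3 μ)) →
      (¬(∀ μ, μ ≠ ν → g l μ = g t1 μ) ∧ ¬(∀ μ, μ ≠ ν → g l μ = g t2 μ) ∧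
       ¬(∀ μ, μ ≠ ν → g l μ = g t3 μ)) →
      k = l ∨ cl k ν - cl l ν = 1 ∨ cl l ν - cl k ν = 1 := by
    intro k l hk hl
    by_cases hkl : k = l
    · left; exact hkl
    · right
      have hE : ∀ μ, μ ≠ ν → g k μ = g l μ :=
        zmod_key ν (g t1) (g t2) (g t3) (g k) (g l) hE12 hE13 hE23
          hk.1 hk.2.1 hk.2.2 hl.1 hl.2.1 hl.2.2
      exact hP k l hkl hE
  -- nonemptiness facts
  have hne : ∀ k : Fin 8, layerCard cl ν (cl k ν) ≠ 0 := by
    intro k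
    apply Finset.card_ne_zero_of_mem (a := k)
    simp [Finset.mem_filter]
  -- fourth class points are within [c-4, c+4]
  have hbound : ∀ k : Fin 8,
      (¬(∀ μ, μ ≠ ν → g k μ = g t1 μ) ∧ ¬(∀ μ, μ ≠ ν → g k μ = g t2 μ) ∧
       ¬(∀ μ, μ ≠ ν → g k μ = g t3 μ)) →
      c - 4 ≤ cl k ν ∧ cl k ν ≤ c + 4 := by
    intro k hk
    have hempty : ∀ d : ℤ, (c + 1 < d ∧ d < cl k ν - 1) ∨ (cl k ν + 1 < d ∧ d < c - 1) →
        layerCard cl ν d = 0 := by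
      intro d hd
      apply Finset.card_eq_zero.mpr
      rw [Finset.eq_empty_iff_forall_notMem]
      intro y hy
      rw [Finset.mem_filter] at hy
      have hyd : cl y ν = d := hy.2
      rcases hclass y with hnear | hfourth
      · omega
      · rcases hF y k hfourth hk with h' | h' | h'
        · subst h'; omega
        · omega
        · omega
    constructor
    · by_contra hlt
      push_neg at hlt
      apply hiso
      refine ⟨c - 3, ?_, ?_, ⟨cl k ν, by omega, hne k⟩, ⟨c, by omega, by omega⟩⟩
      · exact hempty (c - 3) (by omega)
      · have : c - 3 + 1 = c - 2 := by ring
        rw [this]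
        exact hempty (c - 2) (by omega)
    · by_contra hlt
      push_neg at hlt
      apply hiso
      refine ⟨c + 2, ?_, ?_, ⟨c, by omega, by omega⟩, ⟨cl k ν, by omega, hne k⟩⟩
      · exact hempty (c + 2) (by omega)
      · have : c + 2 + 1 = c + 3 := by ring
        rw [this]
        exact hempty (c + 3) (by omega)
  -- conclusion
  intro i j
  rcases hclass i with hi | hi <;> rcases hclass j with hj | hj
  · omega
  · have := hbound j hj; omega
  · have := hbound i hi; omega
  · rcases hF i j hi hj with h' | h' | h'
    · subst h'; omega
    · omega
    · omega
end

section
/- Let cl be a maximal exceptional sequence in Z^3, fix ν, and suppose two distinct layers in direction ν each contain 3 points. Then these two layers are adjacent (their indices differ by 1), and the ν-width of cl is at most 5 assuming additionally that all inner empty layers in direction ν are isolated. -/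
namespace Stmt17Aux

/-- the first coordinate different from ν -/
def o1 (ν : Fin 3) : Fin 3 := if ν = 0 then 1 else 0
/-- the second coordinate different from ν -/
def o2 (ν : Fin 3) : Fin 3 := if ν = 2 then 1 else 2

lemma o_spec : ∀ ν μ : Fin 3, μ ≠ ν → μ = o1 ν ∨ μ = o2 ν := by decide

/-- parity vector in the two coordinates other than ν -/
def pF (cl : Fin 8 → Fin 3 → ℤ) (ν : Fin 3) (i : Fin 8) : ZMod 2 × ZMod 2 :=
  ((cl i (o1 ν) : ZMod 2), (cl i (o2 ν) : ZMod 2))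

lemma key_lt (cl : Fin 8 → Fin 3 → ℤ) (h : IsExceptional cl) (ν : Fin 3)
    {i j : Fin 8} (hij : i < j) (hF : pF cl ν i = pF cl ν j) :
    cl j ν - cl i ν = 1 := by
  obtain ⟨μ, hμ⟩ := h i j hij
  by_cases hμν : μ = ν
  · rwa [hμν] at hμ
  · exfalso
    have hpar : (cl i μ : ZMod 2) = (cl j μ : ZMod 2) := by
      rcases o_spec ν μ hμν with h' | h' <;> subst h'
      · exact congrArg Prod.fst hF
      · exact congrArg Prod.snd hF
    have h1 : ((cl j μ - cl i μ : ℤ) : ZMod 2) = 1 := by rw [hμ]; norm_num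
    rw [Int.cast_sub, ← hpar, sub_self] at h1
    exact (by decide : (0 : ZMod 2) ≠ 1) h1

lemma key (cl : Fin 8 → Fin 3 → ℤ) (h : IsExceptional cl) (ν : Fin 3)
    {i j : Fin 8} (hij : i ≠ j) (hF : pF cl ν i = pF cl ν j) :
    cl i ν - cl j ν = 1 ∨ cl j ν - cl i ν = 1 := by
  rcases lt_or_gt_of_ne hij with h' | h'
  · right; exact key_lt cl h ν h' hF
  · left; exact key_lt cl h ν h' hF.symm

lemma card4 : Fintype.card (ZMod 2 × ZMod 2) = 4 := by decide

/-- a point whose layer is not adjacent (nor equal) to c has parity different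
from every point of layer c -/
lemma excl (cl : Fin 8 → Fin 3 → ℤ) (h : IsExceptional cl) (ν : Fin 3)
    (r : Fin 8) (c : ℤ) (h0 : cl r ν ≠ c) (h1 : cl r ν - c ≠ 1) (h2 : c - cl r ν ≠ 1) :
    pF cl ν r ∉ (Finset.univ.filter fun k : Fin 8 => cl k ν = c).image (pF cl ν) := by
  intro hmem
  obtain ⟨e, he, hFe⟩ := Finset.mem_image.mp hmem
  have hce : cl e ν = c := (Finset.mem_filter.mp he).2
  have hre : r ≠ e := by intro hh; subst hh; exact h0 hce
  rcases key cl h ν hre hFe.symm with h' | h' <;> omega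

lemma inj_layer (cl : Fin 8 → Fin 3 → ℤ) (h : IsExceptional cl) (ν : Fin 3) (c : ℤ) :
    Set.InjOn (pF cl ν) (Finset.univ.filter fun k : Fin 8 => cl k ν = c) := by
  intro x hx y hy hxy
  simp only [Finset.coe_filter, Set.mem_setOf_eq] at hx hy
  by_contra hne
  rcases key cl h ν hne hxy with h' | h' <;> omega

lemma farCase (cl : Fin 8 → Fin 3 → ℤ) (h : IsExceptional cl) (ν : Fin 3) (a : ℤ)
    (hA3 : layerCard cl ν a = 3)
    (hB3 : layerCard cl ν (a + 1) = 3)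
    (hIso : InnerEmptyIsolated cl ν)
    (p q : Fin 8) (hpq : p ≠ q)
    (hmem : ∀ k : Fin 8, cl k ν = a ∨ cl k ν = a + 1 ∨ cl k ν = cl p ν ∨ cl k ν = cl q ν)
    (hp : cl p ν ≠ a ∧ cl p ν ≠ a + 1)
    (hq : cl q ν ≠ a ∧ cl q ν ≠ a + 1)
    (hfar : cl p ν ≤ a - 2 ∨ a + 3 ≤ cl p ν)
    (i j : Fin 8) : cl i ν - cl j ν ≤ 4 := by
  classical
  set A := Finset.univ.filter (fun k : Fin 8 => cl k ν = a) with hA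
  set B := Finset.univ.filter (fun k : Fin 8 => cl k ν = a + 1) with hB
  set imA := A.image (pF cl ν) with himA
  set imB := B.image (pF cl ν) with himB
  have hcardimA : imA.card = 3 := by
    rw [himA, Finset.card_image_of_injOn (inj_layer cl h ν a)]; exact hA3
  have hcardimB : imB.card = 3 := by
    rw [himB, Finset.card_image_of_injOn (inj_layer cl h ν (a + 1))]; exact hB3
  have hpA : pF cl ν p ∉ imA := excl cl h ν p a hp.1 (by omega) (by omega)
  have hpB : pF cl ν p ∉ imB := excl cl h ν p (a + 1) hp.2 (by omega) (by omega)
  have hpU : pF cl ν p ∉ imA ∪ imB := by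
    rw [Finset.mem_union]; tauto
  have hUle : (imA ∪ imB).card ≤ 3 := by
    have h1 : (insert (pF cl ν p) (imA ∪ imB)).card ≤ 4 := by
      have := Finset.card_le_univ (insert (pF cl ν p) (imA ∪ imB))
      rwa [card4] at this
    rw [Finset.card_insert_of_notMem hpU] at h1
    omega
  have hUA : imA = imA ∪ imB :=
    Finset.eq_of_subset_of_card_le Finset.subset_union_left (by omega)
  have hUB : imB = imA ∪ imB :=
    Finset.eq_of_subset_of_card_le Finset.subset_union_right (by omega)
  have hqU : pF cl ν q ∉ imA ∪ imB := by
    rcases (show cl q ν ≤ a - 2 ∨ cl q ν = a - 1 ∨ cl q ν = a + 2 ∨ a + 3 ≤ cl q ν by omega)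
      with h' | h' | h' | h'
    · rw [Finset.mem_union]
      push_neg
      exact ⟨excl cl h ν q a hq.1 (by omega) (by omega),
             excl cl h ν q (a + 1) hq.2 (by omega) (by omega)⟩
    · rw [← hUB]; exact excl cl h ν q (a + 1) hq.2 (by omega) (by omega)
    · rw [← hUA]; exact excl cl h ν q a hq.1 (by omega) (by omega)
    · rw [Finset.mem_union]
      push_neg
      exact ⟨excl cl h ν q a hq.1 (by omega) (by omega),
             excl cl h ν q (a + 1) hq.2 (by omega) (by omega)⟩
  have hFpq : pF cl ν p = pF cl ν q := by
    by_contra hne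
    have h1 : pF cl ν p ∉ insert (pF cl ν q) (imA ∪ imB) := by
      rw [Finset.mem_insert]; tauto
    have h2 : (insert (pF cl ν p) (insert (pF cl ν q) (imA ∪ imB))).card ≤ 4 := by
      have := Finset.card_le_univ (insert (pF cl ν p) (insert (pF cl ν q) (imA ∪ imB)))
      rwa [card4] at this
    rw [Finset.card_insert_of_notMem h1, Finset.card_insert_of_notMem hqU] at h2
    have h3 : 3 ≤ (imA ∪ imB).card := by
      rw [← hcardimA]; exact Finset.card_le_card Finset.subset_union_left
    omega
  have hd : cl p ν - cl q ν = 1 ∨ cl q ν - cl p ν = 1 := key cl h ν hpq hFpq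
  -- emptiness of unused layers
  have hempty : ∀ x : ℤ, x ≠ a → x ≠ a + 1 → x ≠ cl p ν → x ≠ cl q ν →
      layerCard cl ν x = 0 := by
    intro x h1 h2 h3 h4
    rw [layerCard, Finset.card_eq_zero, Finset.filter_eq_empty_iff]
    intro k _
    rcases hmem k with h' | h' | h' | h' <;> omega
  have hne0 : ∀ r : Fin 8, layerCard cl ν (cl r ν) ≠ 0 := by
    intro r
    rw [layerCard]
    exact Finset.card_ne_zero_of_mem (Finset.mem_filter.mpr ⟨Finset.mem_univ r, rfl⟩)
  have hA0 : layerCard cl ν a ≠ 0 := by rw [hA3]; omega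
  by_cases hhi : a + 4 ≤ cl p ν ∧ a + 4 ≤ cl q ν
  · exfalso
    exact hIso ⟨a + 2,
      hempty _ (by omega) (by omega) (by omega) (by omega),
      hempty _ (by omega) (by omega) (by omega) (by omega),
      ⟨a, by omega, hA0⟩, ⟨cl p ν, by omega, hne0 p⟩⟩
  by_cases hlo : cl p ν ≤ a - 3 ∧ cl q ν ≤ a - 3
  · exfalso
    exact hIso ⟨a - 2,
      hempty _ (by omega) (by omega) (by omega) (by omega),
      hempty _ (by omega) (by omega) (by omega) (by omega),
      ⟨cl p ν, by omega, hne0 p⟩, ⟨a, by omega, hA0⟩⟩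
  · have Hi := hmem i
    have Hj := hmem j
    omega

lemma widthLemma (cl : Fin 8 → Fin 3 → ℤ) (h : IsExceptional cl) (ν : Fin 3) (a : ℤ)
    (hA3 : layerCard cl ν a = 3) (hB3 : layerCard cl ν (a + 1) = 3)
    (hIso : InnerEmptyIsolated cl ν) (i j : Fin 8) : cl i ν - cl j ν ≤ 4 := by
  classical
  set A := Finset.univ.filter (fun k : Fin 8 => cl k ν = a) with hA
  set B := Finset.univ.filter (fun k : Fin 8 => cl k ν = a + 1) with hB
  have hdisj : Disjoint A B := by
    rw [Finset.disjoint_left]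
    intro x hx hx'
    rw [hA, Finset.mem_filter] at hx
    rw [hB, Finset.mem_filter] at hx'
    omega
  have hAB : (A ∪ B).card = 6 := by
    rw [Finset.card_union_of_disjoint hdisj]
    have h1 : A.card = 3 := hA3
    have h2 : B.card = 3 := hB3
    omega
  have hT : ((Finset.univ : Finset (Fin 8)) \ (A ∪ B)).card = 2 := by
    rw [Finset.card_sdiff_of_subset (Finset.subset_univ _), hAB]
    simp
  obtain ⟨p, q, hpq, hTeq⟩ := Finset.card_eq_two.mp hT
  have hmem : ∀ k : Fin 8, cl k ν = a ∨ cl k ν = a + 1 ∨ cl k ν = cl p ν ∨ cl k ν = cl q ν := by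
    intro k
    by_cases h1 : cl k ν = a
    · left; exact h1
    by_cases h2 : cl k ν = a + 1
    · right; left; exact h2
    have hk : k ∈ (Finset.univ : Finset (Fin 8)) \ (A ∪ B) := by
      simp [hA, hB, h1, h2]
    rw [hTeq, Finset.mem_insert, Finset.mem_singleton] at hk
    rcases hk with hk | hk <;> subst hk
    · right; right; left; rfl
    · right; right; right; rfl
  have hpmem : p ∈ (Finset.univ : Finset (Fin 8)) \ (A ∪ B) := by
    rw [hTeq]; simp
  have hqmem : q ∈ (Finset.univ : Finset (Fin 8)) \ (A ∪ B) := by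
    rw [hTeq]; simp
  have hp : cl p ν ≠ a ∧ cl p ν ≠ a + 1 := by
    simp [hA, hB, Finset.mem_sdiff] at hpmem; exact hpmem
  have hq : cl q ν ≠ a ∧ cl q ν ≠ a + 1 := by
    simp [hA, hB, Finset.mem_sdiff] at hqmem; exact hqmem
  by_cases hfp : cl p ν ≤ a - 2 ∨ a + 3 ≤ cl p ν
  · exact farCase cl h ν a hA3 hB3 hIso p q hpq hmem hp hq hfp i j
  by_cases hfq : cl q ν ≤ a - 2 ∨ a + 3 ≤ cl q ν
  · exact farCase cl h ν a hA3 hB3 hIso q p hpq.symm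
      (fun k => by rcases hmem k with h' | h' | h' | h' <;> tauto) hq hp hfq i j
  · have Hi := hmem i
    have Hj := hmem j
    omega

end Stmt17Aux

theorem stmt_17 (cl : Fin 8 → (Fin 3 → ℤ)) (h : IsExceptional cl) (ν : Fin 3)
    (a b : ℤ) (hab : a ≠ b)
    (ha : layerCard cl ν a = 3) (hb : layerCard cl ν b = 3) :
    |b - a| = 1 ∧
    (InnerEmptyIsolated cl ν → ∀ i j, cl i ν - cl j ν ≤ 4) := by
  classical
  have habs : b - a = 1 ∨ a - b = 1 := by
    by_contra hcon
    push_neg at hcon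
    set A := Finset.univ.filter (fun k : Fin 8 => cl k ν = a) with hA
    set B := Finset.univ.filter (fun k : Fin 8 => cl k ν = b) with hB
    have hdisj : Disjoint A B := by
      rw [Finset.disjoint_left]
      intro x hx hx'
      rw [hA, Finset.mem_filter] at hx
      rw [hB, Finset.mem_filter] at hx'
      exact hab (by omega)
    have hAB : (A ∪ B).card = 6 := by
      rw [Finset.card_union_of_disjoint hdisj]
      have h1 : A.card = 3 := ha
      have h2 : B.card = 3 := hb
      omega
    have h46 : (Finset.univ : Finset (ZMod 2 × ZMod 2)).card < (A ∪ B).card := by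
      rw [hAB, Finset.card_univ, Stmt17Aux.card4]; omega
    obtain ⟨x, hx, y, hy, hxy, hFxy⟩ :=
      Finset.exists_ne_map_eq_of_card_lt_of_maps_to h46
        (fun x _ => Finset.mem_univ (Stmt17Aux.pF cl ν x))
    have hx' : cl x ν = a ∨ cl x ν = b := by
      rw [Finset.mem_union, hA, hB, Finset.mem_filter, Finset.mem_filter] at hx; tauto
    have hy' : cl y ν = a ∨ cl y ν = b := by
      rw [Finset.mem_union, hA, hB, Finset.mem_filter, Finset.mem_filter] at hy; tauto
    rcases Stmt17Aux.key cl h ν hxy hFxy with h' | h' <;> omega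
  constructor
  · rcases habs with h' | h'
    · rw [show b - a = 1 from h']; norm_num
    · rw [show b - a = -1 by omega]; norm_num
  · intro hIso i j
    rcases habs with h' | h'
    · exact Stmt17Aux.widthLemma cl h ν a ha (by rw [show a + 1 = b by omega]; exact hb) hIso i j
    · exact Stmt17Aux.widthLemma cl h ν b hb (by rw [show b + 1 = a by omega]; exact ha) hIso i j
end

section
/- Let cl be a maximal exceptional sequence in Z^3 with no layer of size 3 or 4 in direction ν, and all inner empty layers in direction ν isolated. Then the ν-width of cl is at most 11; moreover if some layer in direction ν has size 2, the ν-width is at most 9. -/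
private lemma sort4 (w a b d : ℤ) :
    ∃ p q r s : ℤ, p ≤ q ∧ q ≤ r ∧ r ≤ s ∧
      ((p = w ∨ p = a ∨ p = b ∨ p = d) ∧ (q = w ∨ q = a ∨ q = b ∨ q = d) ∧
        (r = w ∨ r = a ∨ r = b ∨ r = d) ∧ (s = w ∨ s = a ∨ s = b ∨ s = d)) ∧
      ((w = p ∨ w = q ∨ w = r ∨ w = s) ∧ (a = p ∨ a = q ∨ a = r ∨ a = s) ∧
        (b = p ∨ b = q ∨ b = r ∨ b = s) ∧ (d = p ∨ d = q ∨ d = r ∨ d = s)) ∧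
      ((p = w ∧ q = a ∧ r = b ∧ s = d) ∨
      (p = w ∧ q = a ∧ r = d ∧ s = b) ∨
      (p = w ∧ q = b ∧ r = a ∧ s = d) ∨
      (p = w ∧ q = b ∧ r = d ∧ s = a) ∨
      (p = w ∧ q = d ∧ r = a ∧ s = b) ∨
      (p = w ∧ q = d ∧ r = b ∧ s = a) ∨
      (p = a ∧ q = w ∧ r = b ∧ s = d) ∨
      (p = a ∧ q = w ∧ r = d ∧ s = b) ∨
      (p = a ∧ q = b ∧ r = w ∧ s = d) ∨
      (p = a ∧ q = b ∧ r = d ∧ s = w) ∨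
      (p = a ∧ q = d ∧ r = w ∧ s = b) ∨
      (p = a ∧ q = d ∧ r = b ∧ s = w) ∨
      (p = b ∧ q = w ∧ r = a ∧ s = d) ∨
      (p = b ∧ q = w ∧ r = d ∧ s = a) ∨
      (p = b ∧ q = a ∧ r = w ∧ s = d) ∨
      (p = b ∧ q = a ∧ r = d ∧ s = w) ∨
      (p = b ∧ q = d ∧ r = w ∧ s = a) ∨
      (p = b ∧ q = d ∧ r = a ∧ s = w) ∨
      (p = d ∧ q = w ∧ r = a ∧ s = b) ∨
      (p = d ∧ q = w ∧ r = b ∧ s = a) ∨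
      (p = d ∧ q = a ∧ r = w ∧ s = b) ∨
      (p = d ∧ q = a ∧ r = b ∧ s = w) ∨
      (p = d ∧ q = b ∧ r = w ∧ s = a) ∨
      (p = d ∧ q = b ∧ r = a ∧ s = w)) := by
  rcases le_total w a with h0 | h0 <;>
  rcases le_total w b with h1 | h1 <;>
  rcases le_total w d with h2 | h2 <;>
  rcases le_total a b with h3 | h3 <;>
  rcases le_total a d with h4 | h4 <;>
  rcases le_total b d with h5 | h5
  · exact ⟨w, a, b, d, by omega, by omega, by omega, ⟨Or.inl rfl, Or.inr (Or.inl rfl), Or.inr (Or.inr (Or.inl rfl)), Or.inr (Or.inr (Or.inr (rfl)))⟩, ⟨Or.inl rfl, Or.inr (Or.inl rfl), Or.inr (Or.inr (Or.inl rfl)), Or.inr (Or.inr (Or.inr (rfl)))⟩, Or.inl ⟨rfl, rfl, rfl, rfl⟩⟩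
  · exact ⟨w, a, d, b, by omega, by omega, by omega, ⟨Or.inl rfl, Or.inr (Or.inl rfl), Or.inr (Or.inr (Or.inr (rfl))), Or.inr (Or.inr (Or.inl rfl))⟩, ⟨Or.inl rfl, Or.inr (Or.inl rfl), Or.inr (Or.inr (Or.inr (rfl))), Or.inr (Or.inr (Or.inl rfl))⟩, Or.inr (Or.inl ⟨rfl, rfl, rfl, rfl⟩)⟩
  · exact ⟨w, a, b, d, by omega, by omega, by omega, ⟨Or.inl rfl, Or.inr (Or.inl rfl), Or.inr (Or.inr (Or.inl rfl)), Or.inr (Or.inr (Or.inr (rfl)))⟩, ⟨Or.inl rfl, Or.inr (Or.inl rfl), Or.inr (Or.inr (Or.inl rfl)), Or.inr (Or.inr (Or.inr (rfl)))⟩, Or.inl ⟨rfl, rfl, rfl, rfl⟩⟩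
  · exact ⟨w, d, a, b, by omega, by omega, by omega, ⟨Or.inl rfl, Or.inr (Or.inr (Or.inr (rfl))), Or.inr (Or.inl rfl), Or.inr (Or.inr (Or.inl rfl))⟩, ⟨Or.inl rfl, Or.inr (Or.inr (Or.inl rfl)), Or.inr (Or.inr (Or.inr (rfl))), Or.inr (Or.inl rfl)⟩, Or.inr (Or.inr (Or.inr (Or.inr (Or.inl ⟨rfl, rfl, rfl, rfl⟩))))⟩
  · exact ⟨w, b, a, d, by omega, by omega, by omega, ⟨Or.inl rfl, Or.inr (Or.inr (Or.inl rfl)), Or.inr (Or.inl rfl), Or.inr (Or.inr (Or.inr (rfl)))⟩, ⟨Or.inl rfl, Or.inr (Or.inr (Or.inl rfl)), Or.inr (Or.inl rfl), Or.inr (Or.inr (Or.inr (rfl)))⟩, Or.inr (Or.inr (Or.inl ⟨rfl, rfl, rfl, rfl⟩))⟩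
  · exact ⟨w, a, b, d, by omega, by omega, by omega, ⟨Or.inl rfl, Or.inr (Or.inl rfl), Or.inr (Or.inr (Or.inl rfl)), Or.inr (Or.inr (Or.inr (rfl)))⟩, ⟨Or.inl rfl, Or.inr (Or.inl rfl), Or.inr (Or.inr (Or.inl rfl)), Or.inr (Or.inr (Or.inr (rfl)))⟩, Or.inl ⟨rfl, rfl, rfl, rfl⟩⟩
  · exact ⟨w, b, d, a, by omega, by omega, by omega, ⟨Or.inl rfl, Or.inr (Or.inr (Or.inl rfl)), Or.inr (Or.inr (Or.inr (rfl))), Or.inr (Or.inl rfl)⟩, ⟨Or.inl rfl, Or.inr (Or.inr (Or.inr (rfl))), Or.inr (Or.inl rfl), Or.inr (Or.inr (Or.inl rfl))⟩, Or.inr (Or.inr (Or.inr (Or.inl ⟨rfl, rfl, rfl, rfl⟩)))⟩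
  · exact ⟨w, d, b, a, by omega, by omega, by omega, ⟨Or.inl rfl, Or.inr (Or.inr (Or.inr (rfl))), Or.inr (Or.inr (Or.inl rfl)), Or.inr (Or.inl rfl)⟩, ⟨Or.inl rfl, Or.inr (Or.inr (Or.inr (rfl))), Or.inr (Or.inr (Or.inl rfl)), Or.inr (Or.inl rfl)⟩, Or.inr (Or.inr (Or.inr (Or.inr (Or.inr (Or.inl ⟨rfl, rfl, rfl, rfl⟩)))))⟩
  · exact ⟨w, a, b, d, by omega, by omega, by omega, ⟨Or.inl rfl, Or.inr (Or.inl rfl), Or.inr (Or.inr (Or.inl rfl)), Or.inr (Or.inr (Or.inr (rfl)))⟩, ⟨Or.inl rfl, Or.inr (Or.inl rfl), Or.inr (Or.inr (Or.inl rfl)), Or.inr (Or.inr (Or.inr (rfl)))⟩, Or.inl ⟨rfl, rfl, rfl, rfl⟩⟩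
  · exact ⟨w, a, d, b, by omega, by omega, by omega, ⟨Or.inl rfl, Or.inr (Or.inl rfl), Or.inr (Or.inr (Or.inr (rfl))), Or.inr (Or.inr (Or.inl rfl))⟩, ⟨Or.inl rfl, Or.inr (Or.inl rfl), Or.inr (Or.inr (Or.inr (rfl))), Or.inr (Or.inr (Or.inl rfl))⟩, Or.inr (Or.inl ⟨rfl, rfl, rfl, rfl⟩)⟩
  · exact ⟨w, d, a, b, by omega, by omega, by omega, ⟨Or.inl rfl, Or.inr (Or.inr (Or.inr (rfl))), Or.inr (Or.inl rfl), Or.inr (Or.inr (Or.inl rfl))⟩, ⟨Or.inl rfl, Or.inr (Or.inr (Or.inl rfl)), Or.inr (Or.inr (Or.inr (rfl))), Or.inr (Or.inl rfl)⟩, Or.inr (Or.inr (Or.inr (Or.inr (Or.inl ⟨rfl, rfl, rfl, rfl⟩))))⟩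
  · exact ⟨d, w, a, b, by omega, by omega, by omega, ⟨Or.inr (Or.inr (Or.inr (rfl))), Or.inl rfl, Or.inr (Or.inl rfl), Or.inr (Or.inr (Or.inl rfl))⟩, ⟨Or.inr (Or.inl rfl), Or.inr (Or.inr (Or.inl rfl)), Or.inr (Or.inr (Or.inr (rfl))), Or.inl rfl⟩, Or.inr (Or.inr (Or.inr (Or.inr (Or.inr (Or.inr (Or.inr (Or.inr (Or.inr (Or.inr (Or.inr (Or.inr (Or.inr (Or.inr (Or.inr (Or.inr (Or.inr (Or.inr (Or.inl ⟨rfl, rfl, rfl, rfl⟩))))))))))))))))))⟩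
  · exact ⟨w, b, a, d, by omega, by omega, by omega, ⟨Or.inl rfl, Or.inr (Or.inr (Or.inl rfl)), Or.inr (Or.inl rfl), Or.inr (Or.inr (Or.inr (rfl)))⟩, ⟨Or.inl rfl, Or.inr (Or.inr (Or.inl rfl)), Or.inr (Or.inl rfl), Or.inr (Or.inr (Or.inr (rfl)))⟩, Or.inr (Or.inr (Or.inl ⟨rfl, rfl, rfl, rfl⟩))⟩
  · exact ⟨w, d, a, b, by omega, by omega, by omega, ⟨Or.inl rfl, Or.inr (Or.inr (Or.inr (rfl))), Or.inr (Or.inl rfl), Or.inr (Or.inr (Or.inl rfl))⟩, ⟨Or.inl rfl, Or.inr (Or.inr (Or.inl rfl)), Or.inr (Or.inr (Or.inr (rfl))), Or.inr (Or.inl rfl)⟩, Or.inr (Or.inr (Or.inr (Or.inr (Or.inl ⟨rfl, rfl, rfl, rfl⟩))))⟩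
  · exact ⟨w, b, d, a, by omega, by omega, by omega, ⟨Or.inl rfl, Or.inr (Or.inr (Or.inl rfl)), Or.inr (Or.inr (Or.inr (rfl))), Or.inr (Or.inl rfl)⟩, ⟨Or.inl rfl, Or.inr (Or.inr (Or.inr (rfl))), Or.inr (Or.inl rfl), Or.inr (Or.inr (Or.inl rfl))⟩, Or.inr (Or.inr (Or.inr (Or.inl ⟨rfl, rfl, rfl, rfl⟩)))⟩
  · exact ⟨d, w, b, a, by omega, by omega, by omega, ⟨Or.inr (Or.inr (Or.inr (rfl))), Or.inl rfl, Or.inr (Or.inr (Or.inl rfl)), Or.inr (Or.inl rfl)⟩, ⟨Or.inr (Or.inl rfl), Or.inr (Or.inr (Or.inr (rfl))), Or.inr (Or.inr (Or.inl rfl)), Or.inl rfl⟩, Or.inr (Or.inr (Or.inr (Or.inr (Or.inr (Or.inr (Or.inr (Or.inr (Or.inr (Or.inr (Or.inr (Or.inr (Or.inr (Or.inr (Or.inr (Or.inr (Or.inr (Or.inr (Or.inr (Or.inl ⟨rfl, rfl, rfl, rfl⟩)))))))))))))))))))⟩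
  · exact ⟨w, a, b, d, by omega, by omega, by omega, ⟨Or.inl rfl, Or.inr (Or.inl rfl), Or.inr (Or.inr (Or.inl rfl)), Or.inr (Or.inr (Or.inr (rfl)))⟩, ⟨Or.inl rfl, Or.inr (Or.inl rfl), Or.inr (Or.inr (Or.inl rfl)), Or.inr (Or.inr (Or.inr (rfl)))⟩, Or.inl ⟨rfl, rfl, rfl, rfl⟩⟩
  · exact ⟨w, a, b, d, by omega, by omega, by omega, ⟨Or.inl rfl, Or.inr (Or.inl rfl), Or.inr (Or.inr (Or.inl rfl)), Or.inr (Or.inr (Or.inr (rfl)))⟩, ⟨Or.inl rfl, Or.inr (Or.inl rfl), Or.inr (Or.inr (Or.inl rfl)), Or.inr (Or.inr (Or.inr (rfl)))⟩, Or.inl ⟨rfl, rfl, rfl, rfl⟩⟩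
  · exact ⟨w, b, a, d, by omega, by omega, by omega, ⟨Or.inl rfl, Or.inr (Or.inr (Or.inl rfl)), Or.inr (Or.inl rfl), Or.inr (Or.inr (Or.inr (rfl)))⟩, ⟨Or.inl rfl, Or.inr (Or.inr (Or.inl rfl)), Or.inr (Or.inl rfl), Or.inr (Or.inr (Or.inr (rfl)))⟩, Or.inr (Or.inr (Or.inl ⟨rfl, rfl, rfl, rfl⟩))⟩
  · exact ⟨w, d, a, b, by omega, by omega, by omega, ⟨Or.inl rfl, Or.inr (Or.inr (Or.inr (rfl))), Or.inr (Or.inl rfl), Or.inr (Or.inr (Or.inl rfl))⟩, ⟨Or.inl rfl, Or.inr (Or.inr (Or.inl rfl)), Or.inr (Or.inr (Or.inr (rfl))), Or.inr (Or.inl rfl)⟩, Or.inr (Or.inr (Or.inr (Or.inr (Or.inl ⟨rfl, rfl, rfl, rfl⟩))))⟩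
  · exact ⟨b, w, a, d, by omega, by omega, by omega, ⟨Or.inr (Or.inr (Or.inl rfl)), Or.inl rfl, Or.inr (Or.inl rfl), Or.inr (Or.inr (Or.inr (rfl)))⟩, ⟨Or.inr (Or.inl rfl), Or.inr (Or.inr (Or.inl rfl)), Or.inl rfl, Or.inr (Or.inr (Or.inr (rfl)))⟩, Or.inr (Or.inr (Or.inr (Or.inr (Or.inr (Or.inr (Or.inr (Or.inr (Or.inr (Or.inr (Or.inr (Or.inr (Or.inl ⟨rfl, rfl, rfl, rfl⟩))))))))))))⟩
  · exact ⟨w, b, a, d, by omega, by omega, by omega, ⟨Or.inl rfl, Or.inr (Or.inr (Or.inl rfl)), Or.inr (Or.inl rfl), Or.inr (Or.inr (Or.inr (rfl)))⟩, ⟨Or.inl rfl, Or.inr (Or.inr (Or.inl rfl)), Or.inr (Or.inl rfl), Or.inr (Or.inr (Or.inr (rfl)))⟩, Or.inr (Or.inr (Or.inl ⟨rfl, rfl, rfl, rfl⟩))⟩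
  · exact ⟨b, w, d, a, by omega, by omega, by omega, ⟨Or.inr (Or.inr (Or.inl rfl)), Or.inl rfl, Or.inr (Or.inr (Or.inr (rfl))), Or.inr (Or.inl rfl)⟩, ⟨Or.inr (Or.inl rfl), Or.inr (Or.inr (Or.inr (rfl))), Or.inl rfl, Or.inr (Or.inr (Or.inl rfl))⟩, Or.inr (Or.inr (Or.inr (Or.inr (Or.inr (Or.inr (Or.inr (Or.inr (Or.inr (Or.inr (Or.inr (Or.inr (Or.inr (Or.inl ⟨rfl, rfl, rfl, rfl⟩)))))))))))))⟩
  · exact ⟨w, b, d, a, by omega, by omega, by omega, ⟨Or.inl rfl, Or.inr (Or.inr (Or.inl rfl)), Or.inr (Or.inr (Or.inr (rfl))), Or.inr (Or.inl rfl)⟩, ⟨Or.inl rfl, Or.inr (Or.inr (Or.inr (rfl))), Or.inr (Or.inl rfl), Or.inr (Or.inr (Or.inl rfl))⟩, Or.inr (Or.inr (Or.inr (Or.inl ⟨rfl, rfl, rfl, rfl⟩)))⟩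
  · exact ⟨a, b, w, d, by omega, by omega, by omega, ⟨Or.inr (Or.inl rfl), Or.inr (Or.inr (Or.inl rfl)), Or.inl rfl, Or.inr (Or.inr (Or.inr (rfl)))⟩, ⟨Or.inr (Or.inr (Or.inl rfl)), Or.inl rfl, Or.inr (Or.inl rfl), Or.inr (Or.inr (Or.inr (rfl)))⟩, Or.inr (Or.inr (Or.inr (Or.inr (Or.inr (Or.inr (Or.inr (Or.inr (Or.inl ⟨rfl, rfl, rfl, rfl⟩))))))))⟩
  · exact ⟨a, d, w, b, by omega, by omega, by omega, ⟨Or.inr (Or.inl rfl), Or.inr (Or.inr (Or.inr (rfl))), Or.inl rfl, Or.inr (Or.inr (Or.inl rfl))⟩, ⟨Or.inr (Or.inr (Or.inl rfl)), Or.inl rfl, Or.inr (Or.inr (Or.inr (rfl))), Or.inr (Or.inl rfl)⟩, Or.inr (Or.inr (Or.inr (Or.inr (Or.inr (Or.inr (Or.inr (Or.inr (Or.inr (Or.inr (Or.inl ⟨rfl, rfl, rfl, rfl⟩))))))))))⟩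
  · exact ⟨b, d, w, a, by omega, by omega, by omega, ⟨Or.inr (Or.inr (Or.inl rfl)), Or.inr (Or.inr (Or.inr (rfl))), Or.inl rfl, Or.inr (Or.inl rfl)⟩, ⟨Or.inr (Or.inr (Or.inl rfl)), Or.inr (Or.inr (Or.inr (rfl))), Or.inl rfl, Or.inr (Or.inl rfl)⟩, Or.inr (Or.inr (Or.inr (Or.inr (Or.inr (Or.inr (Or.inr (Or.inr (Or.inr (Or.inr (Or.inr (Or.inr (Or.inr (Or.inr (Or.inr (Or.inr (Or.inl ⟨rfl, rfl, rfl, rfl⟩))))))))))))))))⟩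
  · exact ⟨d, w, a, b, by omega, by omega, by omega, ⟨Or.inr (Or.inr (Or.inr (rfl))), Or.inl rfl, Or.inr (Or.inl rfl), Or.inr (Or.inr (Or.inl rfl))⟩, ⟨Or.inr (Or.inl rfl), Or.inr (Or.inr (Or.inl rfl)), Or.inr (Or.inr (Or.inr (rfl))), Or.inl rfl⟩, Or.inr (Or.inr (Or.inr (Or.inr (Or.inr (Or.inr (Or.inr (Or.inr (Or.inr (Or.inr (Or.inr (Or.inr (Or.inr (Or.inr (Or.inr (Or.inr (Or.inr (Or.inr (Or.inl ⟨rfl, rfl, rfl, rfl⟩))))))))))))))))))⟩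
  · exact ⟨b, w, a, d, by omega, by omega, by omega, ⟨Or.inr (Or.inr (Or.inl rfl)), Or.inl rfl, Or.inr (Or.inl rfl), Or.inr (Or.inr (Or.inr (rfl)))⟩, ⟨Or.inr (Or.inl rfl), Or.inr (Or.inr (Or.inl rfl)), Or.inl rfl, Or.inr (Or.inr (Or.inr (rfl)))⟩, Or.inr (Or.inr (Or.inr (Or.inr (Or.inr (Or.inr (Or.inr (Or.inr (Or.inr (Or.inr (Or.inr (Or.inr (Or.inl ⟨rfl, rfl, rfl, rfl⟩))))))))))))⟩
  · exact ⟨b, d, w, a, by omega, by omega, by omega, ⟨Or.inr (Or.inr (Or.inl rfl)), Or.inr (Or.inr (Or.inr (rfl))), Or.inl rfl, Or.inr (Or.inl rfl)⟩, ⟨Or.inr (Or.inr (Or.inl rfl)), Or.inr (Or.inr (Or.inr (rfl))), Or.inl rfl, Or.inr (Or.inl rfl)⟩, Or.inr (Or.inr (Or.inr (Or.inr (Or.inr (Or.inr (Or.inr (Or.inr (Or.inr (Or.inr (Or.inr (Or.inr (Or.inr (Or.inr (Or.inr (Or.inr (Or.inl ⟨rfl, rfl, rfl, rfl⟩)))))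)))))))))))⟩
  · exact ⟨b, d, w, a, by omega, by omega, by omega, ⟨Or.inr (Or.inr (Or.inl rfl)), Or.inr (Or.inr (Or.inr (rfl))), Or.inl rfl, Or.inr (Or.inl rfl)⟩, ⟨Or.inr (Or.inr (Or.inl rfl)), Or.inr (Or.inr (Or.inr (rfl))), Or.inl rfl, Or.inr (Or.inl rfl)⟩, Or.inr (Or.inr (Or.inr (Or.inr (Or.inr (Or.inr (Or.inr (Or.inr (Or.inr (Or.inr (Or.inr (Or.inr (Or.inr (Or.inr (Or.inr (Or.inr (Or.inl ⟨rfl, rfl, rfl, rfl⟩))))))))))))))))⟩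
  · exact ⟨d, b, w, a, by omega, by omega, by omega, ⟨Or.inr (Or.inr (Or.inr (rfl))), Or.inr (Or.inr (Or.inl rfl)), Or.inl rfl, Or.inr (Or.inl rfl)⟩, ⟨Or.inr (Or.inr (Or.inl rfl)), Or.inr (Or.inr (Or.inr (rfl))), Or.inr (Or.inl rfl), Or.inl rfl⟩, Or.inr (Or.inr (Or.inr (Or.inr (Or.inr (Or.inr (Or.inr (Or.inr (Or.inr (Or.inr (Or.inr (Or.inr (Or.inr (Or.inr (Or.inr (Or.inr (Or.inr (Or.inr (Or.inr (Or.inr (Or.inr (Or.inr (Or.inl ⟨rfl, rfl, rfl, rfl⟩))))))))))))))))))))))⟩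
  · exact ⟨a, w, b, d, by omega, by omega, by omega, ⟨Or.inr (Or.inl rfl), Or.inl rfl, Or.inr (Or.inr (Or.inl rfl)), Or.inr (Or.inr (Or.inr (rfl)))⟩, ⟨Or.inr (Or.inl rfl), Or.inl rfl, Or.inr (Or.inr (Or.inl rfl)), Or.inr (Or.inr (Or.inr (rfl)))⟩, Or.inr (Or.inr (Or.inr (Or.inr (Or.inr (Or.inr (Or.inl ⟨rfl, rfl, rfl, rfl⟩))))))⟩
  · exact ⟨a, w, d, b, by omega, by omega, by omega, ⟨Or.inr (Or.inl rfl), Or.inl rfl, Or.inr (Or.inr (Or.inr (rfl))), Or.inr (Or.inr (Or.inl rfl))⟩, ⟨Or.inr (Or.inl rfl), Or.inl rfl, Or.inr (Or.inr (Or.inr (rfl))), Or.inr (Or.inr (Or.inl rfl))⟩, Or.inr (Or.inr (Or.inr (Or.inr (Or.inr (Or.inr (Or.inr (Or.inl ⟨rfl, rfl, rfl, rfl⟩)))))))⟩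
  · exact ⟨w, a, b, d, by omega, by omega, by omega, ⟨Or.inl rfl, Or.inr (Or.inl rfl), Or.inr (Or.inr (Or.inl rfl)), Or.inr (Or.inr (Or.inr (rfl)))⟩, ⟨Or.inl rfl, Or.inr (Or.inl rfl), Or.inr (Or.inr (Or.inl rfl)), Or.inr (Or.inr (Or.inr (rfl)))⟩, Or.inl ⟨rfl, rfl, rfl, rfl⟩⟩
  · exact ⟨w, a, d, b, by omega, by omega, by omega, ⟨Or.inl rfl, Or.inr (Or.inl rfl), Or.inr (Or.inr (Or.inr (rfl))), Or.inr (Or.inr (Or.inl rfl))⟩, ⟨Or.inl rfl, Or.inr (Or.inl rfl), Or.inr (Or.inr (Or.inr (rfl))), Or.inr (Or.inr (Or.inl rfl))⟩, Or.inr (Or.inl ⟨rfl, rfl, rfl, rfl⟩)⟩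
  · exact ⟨w, a, b, d, by omega, by omega, by omega, ⟨Or.inl rfl, Or.inr (Or.inl rfl), Or.inr (Or.inr (Or.inl rfl)), Or.inr (Or.inr (Or.inr (rfl)))⟩, ⟨Or.inl rfl, Or.inr (Or.inl rfl), Or.inr (Or.inr (Or.inl rfl)), Or.inr (Or.inr (Or.inr (rfl)))⟩, Or.inl ⟨rfl, rfl, rfl, rfl⟩⟩
  · exact ⟨w, a, b, d, by omega, by omega, by omega, ⟨Or.inl rfl, Or.inr (Or.inl rfl), Or.inr (Or.inr (Or.inl rfl)), Or.inr (Or.inr (Or.inr (rfl)))⟩, ⟨Or.inl rfl, Or.inr (Or.inl rfl), Or.inr (Or.inr (Or.inl rfl)), Or.inr (Or.inr (Or.inr (rfl)))⟩, Or.inl ⟨rfl, rfl, rfl, rfl⟩⟩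
  · exact ⟨w, b, a, d, by omega, by omega, by omega, ⟨Or.inl rfl, Or.inr (Or.inr (Or.inl rfl)), Or.inr (Or.inl rfl), Or.inr (Or.inr (Or.inr (rfl)))⟩, ⟨Or.inl rfl, Or.inr (Or.inr (Or.inl rfl)), Or.inr (Or.inl rfl), Or.inr (Or.inr (Or.inr (rfl)))⟩, Or.inr (Or.inr (Or.inl ⟨rfl, rfl, rfl, rfl⟩))⟩
  · exact ⟨w, d, a, b, by omega, by omega, by omega, ⟨Or.inl rfl, Or.inr (Or.inr (Or.inr (rfl))), Or.inr (Or.inl rfl), Or.inr (Or.inr (Or.inl rfl))⟩, ⟨Or.inl rfl, Or.inr (Or.inr (Or.inl rfl)), Or.inr (Or.inr (Or.inr (rfl))), Or.inr (Or.inl rfl)⟩, Or.inr (Or.inr (Or.inr (Or.inr (Or.inl ⟨rfl, rfl, rfl, rfl⟩))))⟩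
  · exact ⟨a, w, b, d, by omega, by omega, by omega, ⟨Or.inr (Or.inl rfl), Or.inl rfl, Or.inr (Or.inr (Or.inl rfl)), Or.inr (Or.inr (Or.inr (rfl)))⟩, ⟨Or.inr (Or.inl rfl), Or.inl rfl, Or.inr (Or.inr (Or.inl rfl)), Or.inr (Or.inr (Or.inr (rfl)))⟩, Or.inr (Or.inr (Or.inr (Or.inr (Or.inr (Or.inr (Or.inl ⟨rfl, rfl, rfl, rfl⟩))))))⟩
  · exact ⟨a, d, w, b, by omega, by omega, by omega, ⟨Or.inr (Or.inl rfl), Or.inr (Or.inr (Or.inr (rfl))), Or.inl rfl, Or.inr (Or.inr (Or.inl rfl))⟩, ⟨Or.inr (Or.inr (Or.inl rfl)), Or.inl rfl, Or.inr (Or.inr (Or.inr (rfl))), Or.inr (Or.inl rfl)⟩, Or.inr (Or.inr (Or.inr (Or.inr (Or.inr (Or.inr (Or.inr (Or.inr (Or.inr (Or.inr (Or.inl ⟨rfl, rfl, rfl, rfl⟩))))))))))⟩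
  · exact ⟨a, d, w, b, by omega, by omega, by omega, ⟨Or.inr (Or.inl rfl), Or.inr (Or.inr (Or.inr (rfl))), Or.inl rfl, Or.inr (Or.inr (Or.inl rfl))⟩, ⟨Or.inr (Or.inr (Or.inl rfl)), Or.inl rfl, Or.inr (Or.inr (Or.inr (rfl))), Or.inr (Or.inl rfl)⟩, Or.inr (Or.inr (Or.inr (Or.inr (Or.inr (Or.inr (Or.inr (Or.inr (Or.inr (Or.inr (Or.inl ⟨rfl, rfl, rfl, rfl⟩))))))))))⟩
  · exact ⟨d, a, w, b, by omega, by omega, by omega, ⟨Or.inr (Or.inr (Or.inr (rfl))), Or.inr (Or.inl rfl), Or.inl rfl, Or.inr (Or.inr (Or.inl rfl))⟩, ⟨Or.inr (Or.inr (Or.inl rfl)), Or.inr (Or.inl rfl), Or.inr (Or.inr (Or.inr (rfl))), Or.inl rfl⟩, Or.inr (Or.inr (Or.inr (Or.inr (Or.inr (Or.inr (Or.inr (Or.inr (Or.inr (Or.inr (Or.inr (Or.inr (Or.inr (Or.inr (Or.inr (Or.inr (Or.inr (Or.inr (Or.inr (Or.inr (Or.inl ⟨rfl, rfl, rfl, 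rfl⟩))))))))))))))))))))⟩
  · exact ⟨a, b, w, d, by omega, by omega, by omega, ⟨Or.inr (Or.inl rfl), Or.inr (Or.inr (Or.inl rfl)), Or.inl rfl, Or.inr (Or.inr (Or.inr (rfl)))⟩, ⟨Or.inr (Or.inr (Or.inl rfl)), Or.inl rfl, Or.inr (Or.inl rfl), Or.inr (Or.inr (Or.inr (rfl)))⟩, Or.inr (Or.inr (Or.inr (Or.inr (Or.inr (Or.inr (Or.inr (Or.inr (Or.inl ⟨rfl, rfl, rfl, rfl⟩))))))))⟩
  · exact ⟨a, d, w, b, by omega, by omega, by omega, ⟨Or.inr (Or.inl rfl), Or.inr (Or.inr (Or.inr (rfl))), Or.inl rfl, Or.inr (Or.inr (Or.inl rfl))⟩, ⟨Or.inr (Or.inr (Or.inl rfl)), Or.inl rfl, Or.inr (Or.inr (Or.inr (rfl))), Or.inr (Or.inl rfl)⟩, Or.inr (Or.inr (Or.inr (Or.inr (Or.inr (Or.inr (Or.inr (Or.inr (Or.inr (Or.inr (Or.inl ⟨rfl, rfl, rfl, rfl⟩))))))))))⟩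
  · exact ⟨b, d, w, a, by omega, by omega, by omega, ⟨Or.inr (Or.inr (Or.inl rfl)), Or.inr (Or.inr (Or.inr (rfl))), Or.inl rfl, Or.inr (Or.inl rfl)⟩, ⟨Or.inr (Or.inr (Or.inl rfl)), Or.inr (Or.inr (Or.inr (rfl))), Or.inl rfl, Or.inr (Or.inl rfl)⟩, Or.inr (Or.inr (Or.inr (Or.inr (Or.inr (Or.inr (Or.inr (Or.inr (Or.inr (Or.inr (Or.inr (Or.inr (Or.inr (Or.inr (Or.inr (Or.inr (Or.inl ⟨rfl, rfl, rfl, rfl⟩))))))))))))))))⟩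
  · exact ⟨d, w, a, b, by omega, by omega, by omega, ⟨Or.inr (Or.inr (Or.inr (rfl))), Or.inl rfl, Or.inr (Or.inl rfl), Or.inr (Or.inr (Or.inl rfl))⟩, ⟨Or.inr (Or.inl rfl), Or.inr (Or.inr (Or.inl rfl)), Or.inr (Or.inr (Or.inr (rfl))), Or.inl rfl⟩, Or.inr (Or.inr (Or.inr (Or.inr (Or.inr (Or.inr (Or.inr (Or.inr (Or.inr (Or.inr (Or.inr (Or.inr (Or.inr (Or.inr (Or.inr (Or.inr (Or.inr (Or.inr (Or.inl ⟨rfl, rfl, rfl, rfl⟩))))))))))))))))))⟩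
  · exact ⟨a, b, w, d, by omega, by omega, by omega, ⟨Or.inr (Or.inl rfl), Or.inr (Or.inr (Or.inl rfl)), Or.inl rfl, Or.inr (Or.inr (Or.inr (rfl)))⟩, ⟨Or.inr (Or.inr (Or.inl rfl)), Or.inl rfl, Or.inr (Or.inl rfl), Or.inr (Or.inr (Or.inr (rfl)))⟩, Or.inr (Or.inr (Or.inr (Or.inr (Or.inr (Or.inr (Or.inr (Or.inr (Or.inl ⟨rfl, rfl, rfl, rfl⟩))))))))⟩
  · exact ⟨a, w, b, d, by omega, by omega, by omega, ⟨Or.inr (Or.inl rfl), Or.inl rfl, Or.inr (Or.inr (Or.inl rfl)), Or.inr (Or.inr (Or.inr (rfl)))⟩, ⟨Or.inr (Or.inl rfl), Or.inl rfl, Or.inr (Or.inr (Or.inl rfl)), Or.inr (Or.inr (Or.inr (rfl)))⟩, Or.inr (Or.inr (Or.inr (Or.inr (Or.inr (Or.inr (Or.inl ⟨rfl, rfl, rfl, rfl⟩))))))⟩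
  · exact ⟨a, b, w, d, by omega, by omega, by omega, ⟨Or.inr (Or.inl rfl), Or.inr (Or.inr (Or.inl rfl)), Or.inl rfl, Or.inr (Or.inr (Or.inr (rfl)))⟩, ⟨Or.inr (Or.inr (Or.inl rfl)), Or.inl rfl, Or.inr (Or.inl rfl), Or.inr (Or.inr (Or.inr (rfl)))⟩, Or.inr (Or.inr (Or.inr (Or.inr (Or.inr (Or.inr (Or.inr (Or.inr (Or.inl ⟨rfl, rfl, rfl, rfl⟩))))))))⟩
  · exact ⟨a, d, w, b, by omega, by omega, by omega, ⟨Or.inr (Or.inl rfl), Or.inr (Or.inr (Or.inr (rfl))), Or.inl rfl, Or.inr (Or.inr (Or.inl rfl))⟩, ⟨Or.inr (Or.inr (Or.inl rfl)), Or.inl rfl, Or.inr (Or.inr (Or.inr (rfl))), Or.inr (Or.inl rfl)⟩, Or.inr (Or.inr (Or.inr (Or.inr (Or.inr (Or.inr (Or.inr (Or.inr (Or.inr (Or.inr (Or.inl ⟨rfl, rfl, rfl, rfl⟩))))))))))⟩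
  · exact ⟨b, a, w, d, by omega, by omega, by omega, ⟨Or.inr (Or.inr (Or.inl rfl)), Or.inr (Or.inl rfl), Or.inl rfl, Or.inr (Or.inr (Or.inr (rfl)))⟩, ⟨Or.inr (Or.inr (Or.inl rfl)), Or.inr (Or.inl rfl), Or.inl rfl, Or.inr (Or.inr (Or.inr (rfl)))⟩, Or.inr (Or.inr (Or.inr (Or.inr (Or.inr (Or.inr (Or.inr (Or.inr (Or.inr (Or.inr (Or.inr (Or.inr (Or.inr (Or.inr (Or.inl ⟨rfl, rfl, rfl, rfl⟩))))))))))))))⟩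
  · exact ⟨a, b, w, d, by omega, by omega, by omega, ⟨Or.inr (Or.inl rfl), Or.inr (Or.inr (Or.inl rfl)), Or.inl rfl, Or.inr (Or.inr (Or.inr (rfl)))⟩, ⟨Or.inr (Or.inr (Or.inl rfl)), Or.inl rfl, Or.inr (Or.inl rfl), Or.inr (Or.inr (Or.inr (rfl)))⟩, Or.inr (Or.inr (Or.inr (Or.inr (Or.inr (Or.inr (Or.inr (Or.inr (Or.inl ⟨rfl, rfl, rfl, rfl⟩))))))))⟩
  · exact ⟨b, w, a, d, by omega, by omega, by omega, ⟨Or.inr (Or.inr (Or.inl rfl)), Or.inl rfl, Or.inr (Or.inl rfl), Or.inr (Or.inr (Or.inr (rfl)))⟩, ⟨Or.inr (Or.inl rfl), Or.inr (Or.inr (Or.inl rfl)), Or.inl rfl, Or.inr (Or.inr (Or.inr (rfl)))⟩, Or.inr (Or.inr (Or.inr (Or.inr (Or.inr (Or.inr (Or.inr (Or.inr (Or.inr (Or.inr (Or.inr (Or.inr (Or.inl ⟨rfl, rfl, rfl, rfl⟩))))))))))))⟩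
  · exact ⟨b, d, w, a, by omega, by omega, by omega, ⟨Or.inr (Or.inr (Or.inl rfl)), Or.inr (Or.inr (Or.inr (rfl))), Or.inl rfl, Or.inr (Or.inl rfl)⟩, ⟨Or.inr (Or.inr (Or.inl rfl)), Or.inr (Or.inr (Or.inr (rfl))), Or.inl rfl, Or.inr (Or.inl rfl)⟩, Or.inr (Or.inr (Or.inr (Or.inr (Or.inr (Or.inr (Or.inr (Or.inr (Or.inr (Or.inr (Or.inr (Or.inr (Or.inr (Or.inr (Or.inr (Or.inr (Or.inl ⟨rfl, rfl, rfl, rfl⟩))))))))))))))))⟩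
  · exact ⟨a, b, d, w, by omega, by omega, by omega, ⟨Or.inr (Or.inl rfl), Or.inr (Or.inr (Or.inl rfl)), Or.inr (Or.inr (Or.inr (rfl))), Or.inl rfl⟩, ⟨Or.inr (Or.inr (Or.inr (rfl))), Or.inl rfl, Or.inr (Or.inl rfl), Or.inr (Or.inr (Or.inl rfl))⟩, Or.inr (Or.inr (Or.inr (Or.inr (Or.inr (Or.inr (Or.inr (Or.inr (Or.inr (Or.inl ⟨rfl, rfl, rfl, rfl⟩)))))))))⟩
  · exact ⟨a, d, b, w, by omega, by omega, by omega, ⟨Or.inr (Or.inl rfl), Or.inr (Or.inr (Or.inr (rfl))), Or.inr (Or.inr (Or.inl rfl)), Or.inl rfl⟩, ⟨Or.inr (Or.inr (Or.inr (rfl))), Or.inl rfl, Or.inr (Or.inr (Or.inl rfl)), Or.inr (Or.inl rfl)⟩, Or.inr (Or.inr (Or.inr (Or.inr (Or.inr (Or.inr (Or.inr (Or.inr (Or.inr (Or.inr (Or.inr (Or.inl ⟨rfl, rfl, rfl, rfl⟩)))))))))))⟩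
  · exact ⟨a, b, d, w, by omega, by omega, by omega, ⟨Or.inr (Or.inl rfl), Or.inr (Or.inr (Or.inl rfl)), Or.inr (Or.inr (Or.inr (rfl))), Or.inl rfl⟩, ⟨Or.inr (Or.inr (Or.inr (rfl))), Or.inl rfl, Or.inr (Or.inl rfl), Or.inr (Or.inr (Or.inl rfl))⟩, Or.inr (Or.inr (Or.inr (Or.inr (Or.inr (Or.inr (Or.inr (Or.inr (Or.inr (Or.inl ⟨rfl, rfl, rfl, rfl⟩)))))))))⟩
  · exact ⟨d, a, b, w, by omega, by omega, by omega, ⟨Or.inr (Or.inr (Or.inr (rfl))), Or.inr (Or.inl rfl), Or.inr (Or.inr (Or.inl rfl)), Or.inl rfl⟩, ⟨Or.inr (Or.inr (Or.inr (rfl))), Or.inr (Or.inl rfl), Or.inr (Or.inr (Or.inl rfl)), Or.inl rfl⟩, Or.inr (Or.inr (Or.inr (Or.inr (Or.inr (Or.inr (Or.inr (Or.inr (Or.inr (Or.inr (Or.inr (Or.inr (Or.inr (Or.inr (Or.inr (Or.inr (Or.inr (Or.inr (Or.inr (Or.inr (Or.inr (Or.inl ⟨rfl, rfl, rfl, rf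l⟩)))))))))))))))))))))⟩
  · exact ⟨b, a, d, w, by omega, by omega, by omega, ⟨Or.inr (Or.inr (Or.inl rfl)), Or.inr (Or.inl rfl), Or.inr (Or.inr (Or.inr (rfl))), Or.inl rfl⟩, ⟨Or.inr (Or.inr (Or.inr (rfl))), Or.inr (Or.inl rfl), Or.inl rfl, Or.inr (Or.inr (Or.inl rfl))⟩, Or.inr (Or.inr (Or.inr (Or.inr (Or.inr (Or.inr (Or.inr (Or.inr (Or.inr (Or.inr (Or.inr (Or.inr (Or.inr (Or.inr (Or.inr (Or.inl ⟨rfl, rfl, rfl, rfl⟩)))))))))))))))⟩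
  · exact ⟨a, b, d, w, by omega, by omega, by omega, ⟨Or.inr (Or.inl rfl), Or.inr (Or.inr (Or.inl rfl)), Or.inr (Or.inr (Or.inr (rfl))), Or.inl rfl⟩, ⟨Or.inr (Or.inr (Or.inr (rfl))), Or.inl rfl, Or.inr (Or.inl rfl), Or.inr (Or.inr (Or.inl rfl))⟩, Or.inr (Or.inr (Or.inr (Or.inr (Or.inr (Or.inr (Or.inr (Or.inr (Or.inr (Or.inl ⟨rfl, rfl, rfl, rfl⟩)))))))))⟩
  · exact ⟨b, d, a, w, by omega, by omega, by omega, ⟨Or.inr (Or.inr (Or.inl rfl)), Or.inr (Or.inr (Or.inr (rfl))), Or.inr (Or.inl rfl), Or.inl rfl⟩, ⟨Or.inr (Or.inr (Or.inr (rfl))), Or.inr (Or.inr (Or.inl rfl)), Or.inl rfl, Or.inr (Or.inl rfl)⟩, Or.inr (Or.inr (Or.inr (Or.inr (Or.inr (Or.inr (Or.inr (Or.inr (Or.inr (Or.inr (Or.inr (Or.inr (Or.inr (Or.inr (Or.inr (Or.inr (Or.inr (Or.inl ⟨rfl, rfl, rfl, rfl⟩)))))))))))))))))⟩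
  · exact ⟨d, b, a, w, by omega, by omega, by omega, ⟨Or.inr (Or.inr (Or.inr (rfl))), Or.inr (Or.inr (Or.inl rfl)), Or.inr (Or.inl rfl), Or.inl rfl⟩, ⟨Or.inr (Or.inr (Or.inr (rfl))), Or.inr (Or.inr (Or.inl rfl)), Or.inr (Or.inl rfl), Or.inl rfl⟩, Or.inr (Or.inr (Or.inr (Or.inr (Or.inr (Or.inr (Or.inr (Or.inr (Or.inr (Or.inr (Or.inr (Or.inr (Or.inr (Or.inr (Or.inr (Or.inr (Or.inr (Or.inr (Or.inr (Or.inr (Or.inr (Or.inr (Or.inr (⟨rfl, rfl, rfl, rfl⟩)))))))))))))))))))))))⟩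

private lemma chainSorted (p q r s vi vj : ℤ) (h1 : p ≤ q) (h2 : q ≤ r) (h3 : r ≤ s)
    (Dp : (((p)+1 ≤ p ∧ p ≤ (p)+3) ∨ ((p)+1 ≤ q ∧ q ≤ (p)+3) ∨ ((p)+1 ≤ r ∧ r ≤ (p)+3) ∨
        ((p)+1 ≤ s ∧ s ≤ (p)+3)) ∨
      (p ≤ (p)+3 ∧ q ≤ (p)+3 ∧ r ≤ (p)+3 ∧ s ≤ (p)+3 ∧ vi ≤ (p)+3 ∧ vj ≤ (p)+3))
    (Dq : (((q)+1 ≤ p ∧ p ≤ (q)+3) ∨ ((q)+1 ≤ q ∧ q ≤ (q)+3) ∨ ((q)+1 ≤ r ∧ r ≤ (q)+3) ∨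
        ((q)+1 ≤ s ∧ s ≤ (q)+3)) ∨
      (p ≤ (q)+3 ∧ q ≤ (q)+3 ∧ r ≤ (q)+3 ∧ s ≤ (q)+3 ∧ vi ≤ (q)+3 ∧ vj ≤ (q)+3))
    (Dr : (((r)+1 ≤ p ∧ p ≤ (r)+3) ∨ ((r)+1 ≤ q ∧ q ≤ (r)+3) ∨ ((r)+1 ≤ r ∧ r ≤ (r)+3) ∨
        ((r)+1 ≤ s ∧ s ≤ (r)+3)) ∨
      (p ≤ (r)+3 ∧ q ≤ (r)+3 ∧ r ≤ (r)+3 ∧ s ≤ (r)+3 ∧ vi ≤ (r)+3 ∧ vj ≤ (r)+3))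
    (hvi : vi ≤ s + 1) (hvj : p ≤ vj) :
    vi - vj ≤ 10 ∧ (8 < vi - vj → p + 2 ≤ q ∧ q + 2 ≤ r ∧ r + 2 ≤ s) := by
  omega

private lemma coverBound (w a b d p q r s v : ℤ)
    (hBw : w = p ∨ w = q ∨ w = r ∨ w = s) (hBa : a = p ∨ a = q ∨ a = r ∨ a = s)
    (hBb : b = p ∨ b = q ∨ b = r ∨ b = s) (hBd : d = p ∨ d = q ∨ d = r ∨ d = s)
    (h1 : p ≤ q) (h2 : q ≤ r) (h3 : r ≤ s)
    (hv : (v = w ∨ v = w+1) ∨ (v = a ∨ v = a+1) ∨ (v = b ∨ v = b+1) ∨ (v = d ∨ v = d+1)) :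
    p ≤ v ∧ v ≤ s + 1 := by
  omega

private lemma permGaps (w a b d p q r s : ℤ)
    (hperm : (p = w ∧ q = a ∧ r = b ∧ s = d) ∨
      (p = w ∧ q = a ∧ r = d ∧ s = b) ∨
      (p = w ∧ q = b ∧ r = a ∧ s = d) ∨
      (p = w ∧ q = b ∧ r = d ∧ s = a) ∨
      (p = w ∧ q = d ∧ r = a ∧ s = b) ∨
      (p = w ∧ q = d ∧ r = b ∧ s = a) ∨
      (p = a ∧ q = w ∧ r = b ∧ s = d) ∨
      (p = a ∧ q = w ∧ r = d ∧ s = b) ∨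
      (p = a ∧ q = b ∧ r = w ∧ s = d) ∨
      (p = a ∧ q = b ∧ r = d ∧ s = w) ∨
      (p = a ∧ q = d ∧ r = w ∧ s = b) ∨
      (p = a ∧ q = d ∧ r = b ∧ s = w) ∨
      (p = b ∧ q = w ∧ r = a ∧ s = d) ∨
      (p = b ∧ q = w ∧ r = d ∧ s = a) ∨
      (p = b ∧ q = a ∧ r = w ∧ s = d) ∨
      (p = b ∧ q = a ∧ r = d ∧ s = w) ∨
      (p = b ∧ q = d ∧ r = w ∧ s = a) ∨
      (p = b ∧ q = d ∧ r = a ∧ s = w) ∨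
      (p = d ∧ q = w ∧ r = a ∧ s = b) ∨
      (p = d ∧ q = w ∧ r = b ∧ s = a) ∨
      (p = d ∧ q = a ∧ r = w ∧ s = b) ∨
      (p = d ∧ q = a ∧ r = b ∧ s = w) ∨
      (p = d ∧ q = b ∧ r = w ∧ s = a) ∨
      (p = d ∧ q = b ∧ r = a ∧ s = w))
    (hg1 : p + 2 ≤ q) (hg2 : q + 2 ≤ r) (hg3 : r + 2 ≤ s) :
    (w + 2 ≤ a ∨ a + 2 ≤ w) ∧ (w + 2 ≤ b ∨ b + 2 ≤ w) ∧ (w + 2 ≤ d ∨ d + 2 ≤ w) ∧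
    (a + 2 ≤ b ∨ b + 2 ≤ a) ∧ (a + 2 ≤ d ∨ d + 2 ≤ a) ∧ (b + 2 ≤ d ∨ d + 2 ≤ b) := by
  rcases hperm with ⟨e1, e2, e3, e4⟩|⟨e1, e2, e3, e4⟩|⟨e1, e2, e3, e4⟩|⟨e1, e2, e3, e4⟩|⟨e1, e2, e3, e4⟩|⟨e1, e2, e3, e4⟩|⟨e1, e2, e3, e4⟩|⟨e1, e2, e3, e4⟩|⟨e1, e2, e3, e4⟩|⟨e1, e2, e3, e4⟩|⟨e1, e2, e3, e4⟩|⟨e1, e2, e3, e4⟩|⟨e1, e2, e3, e4⟩|⟨e1, e2, e3, e4⟩|⟨e1, e2, e3, e4⟩|⟨e1, e2, e3, e4⟩|⟨e1, e2, e3, e4⟩|⟨e1, e2, e3, e4⟩|⟨e1, e2, e3, e4⟩|⟨e1, e2, e3, e4⟩|⟨e1, e2, e3, e4⟩|⟨e1, e2, e3, e4⟩|⟨e1, e2, e3, e4⟩|⟨e1, e2, e3, e4⟩ <;>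
    refine ⟨?_, ?_, ?_, ?_, ?_, ?_⟩ <;> omega

private lemma convD (w a b d p q r s u vi vj : ℤ)
    (hBw : w = p ∨ w = q ∨ w = r ∨ w = s) (hBa : a = p ∨ a = q ∨ a = r ∨ a = s)
    (hBb : b = p ∨ b = q ∨ b = r ∨ b = s) (hBd : d = p ∨ d = q ∨ d = r ∨ d = s)
    (hPp : p = w ∨ p = a ∨ p = b ∨ p = d) (hPq : q = w ∨ q = a ∨ q = b ∨ q = d)
    (hPr : r = w ∨ r = a ∨ r = b ∨ r = d) (hPs : s = w ∨ s = a ∨ s = b ∨ s = d)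
    (hu : (((u)+1 ≤ w ∧ w ≤ (u)+3) ∨ ((u)+1 ≤ a ∧ a ≤ (u)+3) ∨ ((u)+1 ≤ b ∧ b ≤ (u)+3) ∨
        ((u)+1 ≤ d ∧ d ≤ (u)+3)) ∨
      (w ≤ (u)+3 ∧ a ≤ (u)+3 ∧ b ≤ (u)+3 ∧ d ≤ (u)+3 ∧ vi ≤ (u)+3 ∧ vj ≤ (u)+3)) :
    (((u)+1 ≤ p ∧ p ≤ (u)+3) ∨ ((u)+1 ≤ q ∧ q ≤ (u)+3) ∨ ((u)+1 ≤ r ∧ r ≤ (u)+3) ∨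
        ((u)+1 ≤ s ∧ s ≤ (u)+3)) ∨
      (p ≤ (u)+3 ∧ q ≤ (u)+3 ∧ r ≤ (u)+3 ∧ s ≤ (u)+3 ∧ vi ≤ (u)+3 ∧ vj ≤ (u)+3) := by
  rcases hu with (h | h | h | h) | h
  · refine Or.inl ?_
    rcases hBw with e | e | e | e <;> rw [e] at h
    exacts [Or.inl h, Or.inr (Or.inl h), Or.inr (Or.inr (Or.inl h)), Or.inr (Or.inr (Or.inr h))]
  · refine Or.inl ?_
    rcases hBa with e | e | e | e <;> rw [e] at h
    exacts [Or.inl h, Or.inr (Or.inl h), Or.inr (Or.inr (Or.inl h)), Or.inr (Or.inr (Or.inr h))]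
  · refine Or.inl ?_
    rcases hBb with e | e | e | e <;> rw [e] at h
    exacts [Or.inl h, Or.inr (Or.inl h), Or.inr (Or.inr (Or.inl h)), Or.inr (Or.inr (Or.inr h))]
  · refine Or.inl ?_
    rcases hBd with e | e | e | e <;> rw [e] at h
    exacts [Or.inl h, Or.inr (Or.inl h), Or.inr (Or.inr (Or.inl h)), Or.inr (Or.inr (Or.inr h))]
  · refine Or.inr ⟨?_, ?_, ?_, ?_, h.2.2.2.2.1, h.2.2.2.2.2⟩
    · rcases hPp with e | e | e | e <;> rw [e]
      exacts [h.1, h.2.1, h.2.2.1, h.2.2.2.1]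
    · rcases hPq with e | e | e | e <;> rw [e]
      exacts [h.1, h.2.1, h.2.2.1, h.2.2.2.1]
    · rcases hPr with e | e | e | e <;> rw [e]
      exacts [h.1, h.2.1, h.2.2.1, h.2.2.2.1]
    · rcases hPs with e | e | e | e <;> rw [e]
      exacts [h.1, h.2.1, h.2.2.1, h.2.2.2.1]

private lemma chainCore (w a b d vi vj : ℤ)
    (Dw : (((w)+1 ≤ w ∧ w ≤ (w)+3) ∨ ((w)+1 ≤ a ∧ a ≤ (w)+3) ∨ ((w)+1 ≤ b ∧ b ≤ (w)+3) ∨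
        ((w)+1 ≤ d ∧ d ≤ (w)+3)) ∨
      (w ≤ (w)+3 ∧ a ≤ (w)+3 ∧ b ≤ (w)+3 ∧ d ≤ (w)+3 ∧ vi ≤ (w)+3 ∧ vj ≤ (w)+3))
    (Da : (((a)+1 ≤ w ∧ w ≤ (a)+3) ∨ ((a)+1 ≤ a ∧ a ≤ (a)+3) ∨ ((a)+1 ≤ b ∧ b ≤ (a)+3) ∨
        ((a)+1 ≤ d ∧ d ≤ (a)+3)) ∨
      (w ≤ (a)+3 ∧ a ≤ (a)+3 ∧ b ≤ (a)+3 ∧ d ≤ (a)+3 ∧ vi ≤ (a)+3 ∧ vj ≤ (a)+3))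
    (Db : (((b)+1 ≤ w ∧ w ≤ (b)+3) ∨ ((b)+1 ≤ a ∧ a ≤ (b)+3) ∨ ((b)+1 ≤ b ∧ b ≤ (b)+3) ∨
        ((b)+1 ≤ d ∧ d ≤ (b)+3)) ∨
      (w ≤ (b)+3 ∧ a ≤ (b)+3 ∧ b ≤ (b)+3 ∧ d ≤ (b)+3 ∧ vi ≤ (b)+3 ∧ vj ≤ (b)+3))
    (Dd : (((d)+1 ≤ w ∧ w ≤ (d)+3) ∨ ((d)+1 ≤ a ∧ a ≤ (d)+3) ∨ ((d)+1 ≤ b ∧ b ≤ (d)+3) ∨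
        ((d)+1 ≤ d ∧ d ≤ (d)+3)) ∨
      (w ≤ (d)+3 ∧ a ≤ (d)+3 ∧ b ≤ (d)+3 ∧ d ≤ (d)+3 ∧ vi ≤ (d)+3 ∧ vj ≤ (d)+3))
    (hvi : (vi = w ∨ vi = w+1) ∨ (vi = a ∨ vi = a+1) ∨ (vi = b ∨ vi = b+1) ∨
      (vi = d ∨ vi = d+1))
    (hvj : (vj = w ∨ vj = w+1) ∨ (vj = a ∨ vj = a+1) ∨ (vj = b ∨ vj = b+1) ∨
      (vj = d ∨ vj = d+1)) :
    vi - vj ≤ 10 ∧ (8 < vi - vj →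
      (w + 2 ≤ a ∨ a + 2 ≤ w) ∧ (w + 2 ≤ b ∨ b + 2 ≤ w) ∧ (w + 2 ≤ d ∨ d + 2 ≤ w) ∧
      (a + 2 ≤ b ∨ b + 2 ≤ a) ∧ (a + 2 ≤ d ∨ d + 2 ≤ a) ∧ (b + 2 ≤ d ∨ d + 2 ≤ b)) := by
  obtain ⟨p, q, r, s, h1, h2, h3, ⟨hPp, hPq, hPr, hPs⟩, ⟨hBw, hBa, hBb, hBd⟩, hperm⟩ :=
    sort4 w a b d
  have Dat : ∀ u : ℤ, (u = w ∨ u = a ∨ u = b ∨ u = d) →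
      ((((u)+1 ≤ w ∧ w ≤ (u)+3) ∨ ((u)+1 ≤ a ∧ a ≤ (u)+3) ∨ ((u)+1 ≤ b ∧ b ≤ (u)+3) ∨
        ((u)+1 ≤ d ∧ d ≤ (u)+3)) ∨
      (w ≤ (u)+3 ∧ a ≤ (u)+3 ∧ b ≤ (u)+3 ∧ d ≤ (u)+3 ∧ vi ≤ (u)+3 ∧ vj ≤ (u)+3)) := by
    intro u hu
    rcases hu with e | e | e | e <;> rw [e] <;> assumption
  have Dp := convD w a b d p q r s p vi vj hBw hBa hBb hBd hPp hPq hPr hPs (Dat p hPp)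
  have Dq := convD w a b d p q r s q vi vj hBw hBa hBb hBd hPp hPq hPr hPs (Dat q hPq)
  have Dr := convD w a b d p q r s r vi vj hBw hBa hBb hBd hPp hPq hPr hPs (Dat r hPr)
  have hbi := coverBound w a b d p q r s vi hBw hBa hBb hBd h1 h2 h3 hvi
  have hbj := coverBound w a b d p q r s vj hBw hBa hBb hBd h1 h2 h3 hvj
  have main := chainSorted p q r s vi vj h1 h2 h3 Dp Dq Dr hbi.2 hbj.1
  refine ⟨main.1, fun hbig => ?_⟩
  obtain ⟨g1, g2, g3⟩ := main.2 hbig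
  exact permGaps w a b d p q r s hperm g1 g2 g3

set_option maxHeartbeats 1000000 in
theorem stmt_18 (cl : Fin 8 → (Fin 3 → ℤ)) (h : IsExceptional cl) (ν : Fin 3)
    (h34 : ∀ c : ℤ, layerCard cl ν c ≠ 3 ∧ layerCard cl ν c ≠ 4)
    (hiso : InnerEmptyIsolated cl ν) :
    (∀ i j, cl i ν - cl j ν ≤ 10) ∧
    ((∃ c : ℤ, layerCard cl ν c = 2) → ∀ i j, cl i ν - cl j ν ≤ 8) := by
  classical
  have hother : ∀ ν₀ : Fin 3, ∃ σ τ : Fin 3, σ ≠ τ ∧ σ ≠ ν₀ ∧ τ ≠ ν₀ ∧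
      ∀ μ : Fin 3, μ = ν₀ ∨ μ = σ ∨ μ = τ := by decide
  obtain ⟨σ, τ, hστ, hσν, hτν, hall⟩ := hother ν
  obtain ⟨x, hxi⟩ : ∃ x : Fin 8 → ℤ, ∀ i, x i = cl i ν := ⟨_, fun _ => rfl⟩
  obtain ⟨pr, hpri⟩ : ∃ pr : Fin 8 → ZMod 2 × ZMod 2,
      ∀ i, pr i = ((cl i σ : ZMod 2), (cl i τ : ZMod 2)) := ⟨_, fun _ => rfl⟩
  -- two points in the same parity class differ by exactly 1 in the ν coordinate
  have hpair : ∀ k l : Fin 8, k ≠ l → pr k = pr l → x l - x k = 1 ∨ x k - x l = 1 := by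
    have key : ∀ a b : Fin 8, a < b → pr a = pr b → x b - x a = 1 := by
      intro a b hab hpr'
      obtain ⟨μ, hμ⟩ := h a b hab
      rw [hpri a, hpri b] at hpr'
      have h1 : (cl a σ : ZMod 2) = (cl b σ : ZMod 2) := congrArg Prod.fst hpr'
      have h2 : (cl a τ : ZMod 2) = (cl b τ : ZMod 2) := congrArg Prod.snd hpr'
      rcases hall μ with rfl | rfl | rfl
      · rw [hxi a, hxi b]; exact hμ
      · exfalso
        have he : cl b μ = cl a μ + 1 := by omega
        rw [he] at h1
        push_cast at h1
        have h10 : (1 : ZMod 2) = 0 := left_eq_add.mp h1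
        simp at h10
      · exfalso
        have he : cl b μ = cl a μ + 1 := by omega
        rw [he] at h2
        push_cast at h2
        have h10 : (1 : ZMod 2) = 0 := left_eq_add.mp h2
        simp at h10
    intro k l hkl hpr
    rcases lt_or_gt_of_ne hkl with hlt | hgt
    · left; exact key k l hlt hpr
    · right; exact key l k hgt hpr.symm
  -- base of the parity class of i
  have hicls : ∀ i : Fin 8, i ∈ Finset.univ.filter (fun k => pr k = pr i) := by
    intro i; simp
  have hclsne : ∀ i : Fin 8, (Finset.univ.filter (fun k => pr k = pr i)).Nonempty :=
    fun i => ⟨i, hicls i⟩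
  obtain ⟨B, hBi⟩ : ∃ B : Fin 8 → ℤ,
      ∀ i, B i = (Finset.univ.filter (fun k => pr k = pr i)).inf' (hclsne i) x :=
    ⟨_, fun _ => rfl⟩
  have hBle : ∀ i, B i ≤ x i := by
    intro i; rw [hBi]; exact Finset.inf'_le _ (hicls i)
  have hBmem : ∀ i, ∃ k, x k = B i := by
    intro i
    obtain ⟨k, _, hk2⟩ := Finset.exists_mem_eq_inf' (hclsne i) x
    exact ⟨k, by rw [hBi]; exact hk2.symm⟩
  have hBup : ∀ i, x i ≤ B i + 1 := by
    intro i
    obtain ⟨k, hkcls, hk⟩ := Finset.exists_mem_eq_inf' (hclsne i) x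
    rw [← hBi] at hk
    by_cases hik : k = i
    · rw [hik] at hk; omega
    · have hprk : pr k = pr i := by simpa using hkcls
      have := hpair k i hik hprk
      omega
  have hBcls : ∀ k l, pr k = pr l → B k = B l := by
    intro k l hp
    have hset : Finset.univ.filter (fun m => pr m = pr k)
        = Finset.univ.filter (fun m => pr m = pr l) := by
      ext m; simp [hp]
    rw [hBi, hBi]
    exact Finset.inf'_congr _ hset (fun _ _ => rfl)
  -- the four base values
  obtain ⟨g, hgi⟩ : ∃ g : ZMod 2 × ZMod 2 → ℤ,
      ∀ q, g q = if hq : ∃ i, pr i = q then B hq.choose else B 0 := ⟨_, fun _ => rfl⟩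
  have hgB : ∀ i, g (pr i) = B i := by
    intro i
    have hq : ∃ k, pr k = pr i := ⟨i, rfl⟩
    rw [hgi, dif_pos hq]
    exact hBcls _ _ hq.choose_spec
  have hgocc : ∀ q, ∃ k, x k = g q := by
    intro q
    rw [hgi]
    by_cases hq : ∃ i, pr i = q
    · rw [dif_pos hq]; exact hBmem _
    · rw [dif_neg hq]; exact hBmem 0
  have hQ : ∀ q : ZMod 2 × ZMod 2, q = (0,0) ∨ q = (0,1) ∨ q = (1,0) ∨ q = (1,1) := by
    decide
  obtain ⟨w, hw⟩ : ∃ w, w = g (0,0) := ⟨_, rfl⟩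
  obtain ⟨a, ha⟩ : ∃ a, a = g (0,1) := ⟨_, rfl⟩
  obtain ⟨b, hb⟩ : ∃ b, b = g (1,0) := ⟨_, rfl⟩
  obtain ⟨d, hd⟩ : ∃ d, d = g (1,1) := ⟨_, rfl⟩
  have hcov : ∀ i, (x i = w ∨ x i = w+1) ∨ (x i = a ∨ x i = a+1) ∨
      (x i = b ∨ x i = b+1) ∨ (x i = d ∨ x i = d+1) := by
    intro i
    have h1 : g (pr i) ≤ x i := by rw [hgB]; exact hBle i
    have h2 : x i ≤ g (pr i) + 1 := by rw [hgB]; exact hBup i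
    rcases hQ (pr i) with hq | hq | hq | hq <;> rw [hq] at h1 h2 <;>
      [rw [← hw] at h1 h2; rw [← ha] at h1 h2; rw [← hb] at h1 h2; rw [← hd] at h1 h2] <;>
      omega
  -- occupancy and the gap lemma from hiso
  have occ0 : ∀ c : ℤ, layerCard cl ν c = 0 ↔ ∀ i, x i ≠ c := by
    intro c
    rw [layerCard, Finset.card_eq_zero, Finset.filter_eq_empty_iff]
    constructor
    · intro hh i
      rw [hxi]
      exact hh (Finset.mem_univ i)
    · intro hh p _
      rw [← hxi p]
      exact hh p
  have gap : ∀ u : ℤ, (∃ i, x i = u) → (∀ k, x k ≠ u+2 ∧ x k ≠ u+3) → ∀ k, x k ≤ u+3 := by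
    intro u hu hav k
    obtain ⟨i0, hi0⟩ := hu
    by_contra hk
    push_neg at hk
    refine hiso ⟨u+2, ?_, ?_, ⟨u, by omega, ?_⟩, ⟨x k, by omega, ?_⟩⟩
    · exact (occ0 _).mpr fun j => (hav j).1
    · have he : u + 2 + 1 = u + 3 := by ring
      rw [he]
      exact (occ0 _).mpr fun j => (hav j).2
    · intro h0; exact (occ0 u).mp h0 i0 hi0
    · intro h0; exact (occ0 _).mp h0 k rfl
  have mkD : ∀ u : ℤ, (∃ i, x i = u) →
      ((u+1 ≤ w ∧ w ≤ u+3) ∨ (u+1 ≤ a ∧ a ≤ u+3) ∨ (u+1 ≤ b ∧ b ≤ u+3) ∨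
        (u+1 ≤ d ∧ d ≤ u+3)) ∨ (∀ k, x k ≤ u+3) := by
    intro u hu
    by_cases hP : (u+1 ≤ w ∧ w ≤ u+3) ∨ (u+1 ≤ a ∧ a ≤ u+3) ∨ (u+1 ≤ b ∧ b ≤ u+3) ∨
        (u+1 ≤ d ∧ d ≤ u+3)
    · exact Or.inl hP
    · refine Or.inr (gap u hu fun k => ?_)
      have hc := hcov k
      push_neg at hP
      constructor <;> omega
  obtain ⟨kw, hkw0⟩ := hgocc (0,0)
  obtain ⟨ka, hka0⟩ := hgocc (0,1)
  obtain ⟨kb, hkb0⟩ := hgocc (1,0)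
  obtain ⟨kd, hkd0⟩ := hgocc (1,1)
  have hkw : x kw = w := by rw [hw]; exact hkw0
  have hka : x ka = a := by rw [ha]; exact hka0
  have hkb : x kb = b := by rw [hb]; exact hkb0
  have hkd : x kd = d := by rw [hd]; exact hkd0
  clear hkw0 hka0 hkb0 hkd0
  -- instantiated disjunction facts
  have mkD' : ∀ u : ℤ, (∃ i, x i = u) → ∀ i j : Fin 8,
      ((u+1 ≤ w ∧ w ≤ u+3) ∨ (u+1 ≤ a ∧ a ≤ u+3) ∨ (u+1 ≤ b ∧ b ≤ u+3) ∨
        (u+1 ≤ d ∧ d ≤ u+3)) ∨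
      (w ≤ u+3 ∧ a ≤ u+3 ∧ b ≤ u+3 ∧ d ≤ u+3 ∧ x i ≤ u+3 ∧ x j ≤ u+3) := by
    intro u hu i j
    refine (mkD u hu).imp id fun hall2 => ?_
    exact ⟨hkw ▸ hall2 kw, hka ▸ hall2 ka, hkb ▸ hall2 kb, hkd ▸ hall2 kd, hall2 i, hall2 j⟩
  have KEY : ∀ i j : Fin 8, x i - x j ≤ 10 ∧ (8 < x i - x j →
      (w + 2 ≤ a ∨ a + 2 ≤ w) ∧ (w + 2 ≤ b ∨ b + 2 ≤ w) ∧ (w + 2 ≤ d ∨ d + 2 ≤ w) ∧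
      (a + 2 ≤ b ∨ b + 2 ≤ a) ∧ (a + 2 ≤ d ∨ d + 2 ≤ a) ∧ (b + 2 ≤ d ∨ d + 2 ≤ b)) :=
    fun i j => chainCore w a b d (x i) (x j)
      (mkD' w ⟨kw, hkw⟩ i j) (mkD' a ⟨ka, hka⟩ i j) (mkD' b ⟨kb, hkb⟩ i j)
      (mkD' d ⟨kd, hkd⟩ i j) (hcov i) (hcov j)
  -- separation: if some two points are ≥ 9 apart, all points are in distinct layers
  have hsep : ∀ i j : Fin 8, 8 < x i - x j → ∀ k l : Fin 8, k ≠ l → x k ≠ x l := by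
    intro i j hbig k l hkl
    have C := (KEY i j).2 hbig
    by_cases hp : pr k = pr l
    · rcases hpair k l hkl hp with h1 | h1 <;> omega
    · have hk1 : g (pr k) ≤ x k := by rw [hgB]; exact hBle k
      have hk2 : x k ≤ g (pr k) + 1 := by rw [hgB]; exact hBup k
      have hl1 : g (pr l) ≤ x l := by rw [hgB]; exact hBle l
      have hl2 : x l ≤ g (pr l) + 1 := by rw [hgB]; exact hBup l
      rcases hQ (pr k) with e | e | e | e <;> rcases hQ (pr l) with f | f | f | f <;>
        rw [e] at hk1 hk2 <;> rw [f] at hl1 hl2 <;>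
        first
          | (exact absurd (e.trans f.symm) hp)
          | omega
  constructor
  · intro i j
    rw [← hxi i, ← hxi j]
    exact (KEY i j).1
  · rintro ⟨c, hc⟩ i j
    by_contra hbig
    push_neg at hbig
    rw [← hxi i, ← hxi j] at hbig
    have hdist := hsep i j hbig
    have hcard : layerCard cl ν c ≤ 1 := by
      rw [layerCard]
      refine Finset.card_le_one.mpr fun p hp q hq => ?_
      by_contra hpq
      have hp' : x p = c := by rw [hxi]; exact (Finset.mem_filter.mp hp).2
      have hq' : x q = c := by rw [hxi]; exact (Finset.mem_filter.mp hq).2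
      exact hdist p q hpq (hp'.trans hq'.symm)
    rw [hc] at hcard
    exact absurd hcard (by norm_num)
end
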